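/- arXiv:math/0009210 — 13 statements merged into one kernel-verified Lean document; each statement's English description precedes it below -/
import Mathlib

section
/- For every real a > 1, every h > 0, and every nonnegative integer n, the equation n = ((a²t² − 1)/(2at))·h + (((a²−2)t² − 1)/(2t√(1+t²))) has a unique solution t ∈ (1/a, +∞). -/
noncomputable def panF (a h : ℝ) : ℝ → ℝ := fun t =>
  (a ^ 2 * t ^ 2 - 1) / (2 * a * t) * h +
    ((a ^ 2 - 2) * t ^ 2 - 1) / (2 * t * Real.sqrt (1 + t ^ 2))

lemma panF_strictMono (a h : ℝ) (ha : 1 < a) (hh : 0 < h) :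
    ∀ s t : ℝ, 0 < s → s < t → panF a h s < panF a h t := by
  intro s t hs hst
  have ht : 0 < t := hs.trans hst
  have ha0 : 0 < a := lt_trans one_pos ha
  set u := Real.sqrt (1 + s ^ 2) with hu_def
  set v := Real.sqrt (1 + t ^ 2) with hv_def
  have hu2 : u ^ 2 = 1 + s ^ 2 := Real.sq_sqrt (by positivity)
  have hv2 : v ^ 2 = 1 + t ^ 2 := Real.sq_sqrt (by positivity)
  have hu0 : 0 < u := Real.sqrt_pos.2 (by positivity)
  have hv0 : 0 < v := Real.sqrt_pos.2 (by positivity)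
  have h1 : (a ^ 2 * s ^ 2 - 1) / (2 * a * s) * h < (a ^ 2 * t ^ 2 - 1) / (2 * a * t) * h := by
    rw [div_mul_eq_mul_div, div_mul_eq_mul_div, div_lt_div_iff₀ (by positivity) (by positivity)]
    have key : (a ^ 2 * s ^ 2 - 1) * t - (a ^ 2 * t ^ 2 - 1) * s < 0 := by
      nlinarith [mul_pos (sub_pos.2 hst) (by positivity : (0:ℝ) < a ^ 2 * s * t + 1)]
    nlinarith [mul_lt_mul_of_pos_right key (by positivity : (0:ℝ) < 2 * a * h)]
  have e1 : s * v ≤ t * u := by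
    apply le_of_pow_le_pow_left₀ two_ne_zero (by positivity)
    have A : (s * v) ^ 2 = s ^ 2 * (1 + t ^ 2) := by rw [mul_pow, hv2]
    have B : (t * u) ^ 2 = t ^ 2 * (1 + s ^ 2) := by rw [mul_pow, hu2]
    rw [A, B]; nlinarith
  have e2 : (2 * t ^ 2 + 1) * (s * u) ≤ (2 * s ^ 2 + 1) * (t * v) := by
    apply le_of_pow_le_pow_left₀ two_ne_zero (by positivity)
    have A : ((2 * t ^ 2 + 1) * (s * u)) ^ 2
        = (4 * (t ^ 2 + t ^ 4) + 1) * (s ^ 2 + s ^ 4) := by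
      rw [mul_pow, mul_pow, hu2]; ring
    have B : ((2 * s ^ 2 + 1) * (t * v)) ^ 2
        = (4 * (s ^ 2 + s ^ 4) + 1) * (t ^ 2 + t ^ 4) := by
      rw [mul_pow, mul_pow, hv2]; ring
    rw [A, B]
    have hX : s ^ 2 + s ^ 4 ≤ t ^ 2 + t ^ 4 := by
      have h2 : s ^ 2 < t ^ 2 := by nlinarith [mul_pos hs ht]
      have h4 : s ^ 4 < t ^ 4 := by nlinarith [pow_pos hs 2, pow_pos ht 2]
      linarith
    nlinarith [hX]
  have h2 : ((a ^ 2 - 2) * s ^ 2 - 1) / (2 * s * u) ≤ ((a ^ 2 - 2) * t ^ 2 - 1) / (2 * t * v) := by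
    rw [div_le_div_iff₀ (by positivity) (by positivity)]
    have e1' : a ^ 2 * (s * t) * (s * v) ≤ a ^ 2 * (s * t) * (t * u) :=
      mul_le_mul_of_nonneg_left e1 (by positivity)
    nlinarith [e1', e2]
  simp only [panF, ← hu_def, ← hv_def]
  exact add_lt_add_of_lt_of_le h1 h2

lemma panF_continuousOn (a h : ℝ) (ha : 1 < a) :
    ContinuousOn (panF a h) (Set.Ioi (0:ℝ)) := by
  have ha0 : 0 < a := lt_trans one_pos ha
  apply ContinuousOn.add
  · apply ContinuousOn.mul _ continuousOn_const
    apply ContinuousOn.div (by fun_prop) (by fun_prop)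
    intro x hx
    have hx0 : 0 < x := hx
    positivity
  · apply ContinuousOn.div (by fun_prop)
    · apply ContinuousOn.mul (by fun_prop)
      exact (Real.continuous_sqrt.comp (by fun_prop)).continuousOn
    · intro x hx
      have hx0 : 0 < x := hx
      have : 0 < Real.sqrt (1 + x ^ 2) := Real.sqrt_pos.2 (by positivity)
      positivity

/-- For every real `a > 1`, every `h > 0`, and every nonnegative integer `n`,
the pantographic equation
`n = ((a²t² − 1)/(2at))·h + (((a²−2)t² − 1)/(2t√(1+t²)))`
has a unique solution `t ∈ (1/a, +∞)`. -/
theorem pantographic_unique_solution (a h : ℝ) (n : ℕ) (ha : 1 < a) (hh : 0 < h) :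
    ∃! t : ℝ, 1 / a < t ∧
      (n : ℝ) = (a ^ 2 * t ^ 2 - 1) / (2 * a * t) * h +
        ((a ^ 2 - 2) * t ^ 2 - 1) / (2 * t * Real.sqrt (1 + t ^ 2)) := by
  have ha0 : 0 < a := lt_trans one_pos ha
  have hia : 0 < 1 / a := by positivity
  -- value at 1/a is negative
  have hFa : panF a h (1 / a) < 0 := by
    unfold panF
    have h1 : a ^ 2 * (1 / a) ^ 2 - 1 = 0 := by field_simp; norm_num
    rw [h1, zero_div, zero_mul, zero_add]
    have hone : (1 / a) ^ 2 * a ^ 2 = 1 := by field_simp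
    have hnum : (a ^ 2 - 2) * (1 / a) ^ 2 - 1 < 0 := by
      nlinarith [pow_pos hia 2]
    have hs0 : 0 < Real.sqrt (1 + (1 / a) ^ 2) := Real.sqrt_pos.2 (by positivity)
    exact div_neg_of_neg_of_pos hnum (by positivity)
  -- choose a large T
  obtain ⟨T, hT_def⟩ : ∃ T : ℝ, T = (2 * (n : ℝ) + 5 + h) / h + 1 := ⟨_, rfl⟩
  have hT1 : 1 ≤ T := by
    rw [hT_def]
    have : 0 ≤ (2 * (n : ℝ) + 5 + h) / h := by positivity
    linarith
  have hT0 : 0 < T := lt_of_lt_of_le one_pos hT1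
  have hTa : 1 / a < T := by
    have : 1 / a < 1 := by rw [div_lt_one ha0]; exact ha
    linarith
  have hhT : 2 * (n : ℝ) + 5 + h ≤ h * T := by
    rw [hT_def, mul_add, mul_one, mul_div_cancel₀ _ (ne_of_gt hh)]
    linarith
  have hP : 1 ≤ a * T := by nlinarith
  have hP2 : 2 * (n : ℝ) + 5 + h ≤ h * (a * T) := by nlinarith
  -- F T ≥ n
  have hFT : (n : ℝ) ≤ panF a h T := by
    unfold panF
    set v := Real.sqrt (1 + T ^ 2) with hv_def
    have hv2 : v ^ 2 = 1 + T ^ 2 := Real.sq_sqrt (by positivity)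
    have hv0 : 0 < v := Real.sqrt_pos.2 (by positivity)
    have hvT : T ≤ v := by nlinarith
    have hterm2 : -2 ≤ ((a ^ 2 - 2) * T ^ 2 - 1) / (2 * T * v) := by
      rw [le_div_iff₀ (by positivity)]
      nlinarith [mul_le_mul_of_nonneg_left hvT (by positivity : (0:ℝ) ≤ 4 * T)]
    have hterm1 : (n : ℝ) + 2 ≤ (a ^ 2 * T ^ 2 - 1) / (2 * a * T) * h := by
      rw [div_mul_eq_mul_div, le_div_iff₀ (by positivity)]
      nlinarith [mul_le_mul_of_nonneg_right hP2 (by positivity : (0:ℝ) ≤ a * T),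
        mul_le_mul_of_nonneg_right hP (by linarith : (0:ℝ) ≤ 1 + h)]
    linarith
  -- existence via IVT
  have hsub : Set.Icc (1 / a) T ⊆ Set.Ioi (0:ℝ) := fun x hx => lt_of_lt_of_le hia hx.1
  have hcont : ContinuousOn (panF a h) (Set.Icc (1 / a) T) :=
    (panF_continuousOn a h ha).mono hsub
  have hmem : (n : ℝ) ∈ Set.Icc (panF a h (1 / a)) (panF a h T) :=
    ⟨le_trans (le_of_lt hFa) (Nat.cast_nonneg n), hFT⟩
  obtain ⟨t, htmem, htval⟩ := intermediate_value_Icc (le_of_lt hTa) hcont hmem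
  have ht_gt : 1 / a < t := by
    rcases eq_or_lt_of_le htmem.1 with heq | hlt
    · exfalso; rw [← heq] at htval
      have : (0:ℝ) ≤ (n : ℝ) := Nat.cast_nonneg n
      linarith [hFa, htval.ge, htval.le]
    · exact hlt
  refine ⟨t, ⟨ht_gt, ?_⟩, ?_⟩
  · exact htval.symm
  · rintro y ⟨hy1, hy2⟩
    have hy0 : 0 < y := lt_trans hia hy1
    have ht0 : 0 < t := lt_trans hia ht_gt
    have hyF : panF a h y = (n : ℝ) := hy2.symm
    have htF : panF a h t = (n : ℝ) := htval
    rcases lt_trichotomy y t with hlt | heq | hgt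
    · exfalso
      have := panF_strictMono a h ha hh y t hy0 hlt
      rw [hyF, htF] at this; exact lt_irrefl _ this
    · exact heq
    · exfalso
      have := panF_strictMono a h ha hh t y ht0 hgt
      rw [hyF, htF] at this; exact lt_irrefl _ this
end

section
/- For a > 1, 0 < λ < π/2, the condition tan(2β) ≥ a·cos λ/(1 + sin λ), where tan β = cos λ/(a sin λ) with 0 < β < π/4, is equivalent to sin λ ≤ 1/(a−1). -/
open Real

/-- For `a > 1`, `0 < λ < π/2`, `β ∈ (0, π/4)` with `tan β = cos λ / (a sin λ)`,
the condition `tan (2β) ≥ a cos λ / (1 + sin λ)` is equivalent to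
`sin λ ≤ 1/(a−1)`. -/
theorem straight_part_condition (a lam beta : ℝ) (ha : 1 < a)
    (hlam : lam ∈ Set.Ioo 0 (π / 2)) (hbeta : beta ∈ Set.Ioo 0 (π / 4))
    (htan : Real.tan beta = Real.cos lam / (a * Real.sin lam)) :
    a * Real.cos lam / (1 + Real.sin lam) ≤ Real.tan (2 * beta) ↔
      Real.sin lam ≤ 1 / (a - 1) := by
  obtain ⟨hl0, hl2⟩ := hlam
  obtain ⟨hb0, hb4⟩ := hbeta
  have hpi := Real.pi_pos
  have hs : 0 < Real.sin lam := Real.sin_pos_of_pos_of_lt_pi hl0 (by linarith)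
  have hc : 0 < Real.cos lam := Real.cos_pos_of_mem_Ioo ⟨by linarith, hl2⟩
  have ha0 : (0:ℝ) < a := by linarith
  have htb1 : Real.tan beta < 1 := by
    have := Real.tan_lt_tan_of_lt_of_lt_pi_div_two (x := beta) (y := π/4)
      (by linarith) (by linarith) hb4
    rwa [Real.tan_pi_div_four] at this
  have hcs : Real.cos lam < a * Real.sin lam := by
    rw [htan, div_lt_one (by positivity)] at htb1
    exact htb1
  have hD : 0 < a^2 * (Real.sin lam)^2 - (Real.cos lam)^2 := by nlinarith
  have ht2 : Real.tan (2 * beta) =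
      2 * a * Real.sin lam * Real.cos lam / (a^2 * (Real.sin lam)^2 - (Real.cos lam)^2) := by
    have hq : (Real.cos lam / (a * Real.sin lam))^2 < 1 := by
      have h0 : 0 < Real.cos lam / (a * Real.sin lam) := by positivity
      have h1 : Real.cos lam / (a * Real.sin lam) < 1 := by
        rw [div_lt_one (by positivity)]; exact hcs
      nlinarith
    rw [Real.tan_two_mul, htan]
    rw [div_eq_div_iff (by nlinarith) (by positivity)]
    field_simp
  have h1 : (0:ℝ) < 1 + Real.sin lam := by linarith
  have hpy := Real.sin_sq_add_cos_sq lam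
  rw [ht2, div_le_div_iff₀ h1 hD, le_div_iff₀ (by linarith : (0:ℝ) < a - 1)]
  have hfact : a * Real.cos lam * (a^2 * (Real.sin lam)^2 - (Real.cos lam)^2)
      - 2 * a * Real.sin lam * Real.cos lam * (1 + Real.sin lam)
      = a * Real.cos lam * (((a-1) * Real.sin lam - 1) * ((a+1) * Real.sin lam + 1)) := by
    linear_combination (-(a * Real.cos lam)) * hpy
  have hX2 : 0 < (a+1) * Real.sin lam + 1 := by nlinarith
  have hac : 0 < a * Real.cos lam := by positivity
  constructor
  · intro h
    have hY : ((a-1) * Real.sin lam - 1) * ((a+1) * Real.sin lam + 1) ≤ 0 := by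
      nlinarith
    nlinarith
  · intro h
    have hY : ((a-1) * Real.sin lam - 1) * ((a+1) * Real.sin lam + 1) ≤ 0 :=
      mul_nonpos_of_nonpos_of_nonneg (by nlinarith) hX2.le
    nlinarith [mul_nonpos_of_nonneg_of_nonpos hac.le hY]
end

section
/- Define, for a > 1 and t > 1/a, the functions A(t) = (a²t² − 1)/(2at) and B(t) = ((a²−2)t² − 1)/(2t√(1+t²)), so that h(t) = (n − B(t))/A(t) for a fixed nonnegative integer n. Then A is strictly increasing and positive on (1/a, ∞), and consequently for each fixed a > 1 and n ≥ 0, the unique solution t(h) of n = A(t)h + B(t) is a strictly decreasing function of h on the set where it is defined. -/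
open Real Set

/-!
`A(t) = at/2 − 1/(2at)` is increasing, and `B` is increasing on `(0, ∞)` because the numerator
of `B(y) − B(x)` factors as `(y√(1+x²) − x√(1+y²)) · ((a²−1)xy + √(1+x²)√(1+y²))`.
If `t₁ ≤ t₂` for solutions at `h₁ < h₂`, then `A(t₁)h₁ + B(t₁) < A(t₂)h₂ + B(t₂)` since `A > 0`,
so both cannot equal `n`.
-/

theorem lt_of_mul_add_eq_mul_add {α : Type*} [LinearOrder α] {s : Set α} {f g : α → ℝ}
    (hf : MonotoneOn f s) (hg : MonotoneOn g s) (hf_pos : ∀ t ∈ s, 0 < f t)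
    {h₁ h₂ : ℝ} {t₁ t₂ : α} (hh₁ : 0 ≤ h₁) (hh : h₁ < h₂) (ht₁ : t₁ ∈ s) (ht₂ : t₂ ∈ s)
    (heq : f t₁ * h₁ + g t₁ = f t₂ * h₂ + g t₂) : t₂ < t₁ := by
  by_contra! hle
  have hA : f t₁ * h₁ < f t₂ * h₂ :=
    calc f t₁ * h₁ ≤ f t₂ * h₁ := mul_le_mul_of_nonneg_right (hf ht₁ ht₂ hle) hh₁
      _ < f t₂ * h₂ := mul_lt_mul_of_pos_left hh (hf_pos t₂ ht₂)
  linarith [hg ht₁ ht₂ hle]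

theorem strictMonoOn_coeffA {a : ℝ} (ha : 0 < a) :
    StrictMonoOn (fun t : ℝ => (a ^ 2 * t ^ 2 - 1) / (2 * a * t)) (Ioi 0) := by
  intro x (hx : 0 < x) y (hy : 0 < y) hxy
  rw [div_lt_div_iff₀ (by positivity) (by positivity)]
  nlinarith [mul_pos (sub_pos.mpr hxy) (show 0 < a ^ 2 * x * y + 1 by positivity)]

theorem coeffA_pos {a t : ℝ} (ha : 0 < a) (ht : 1 / a < t) :
    0 < (a ^ 2 * t ^ 2 - 1) / (2 * a * t) := by
  have hat : 1 < a * t := by rwa [div_lt_iff₀' ha] at ht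
  have ht0 : 0 < t := (one_div_pos.mpr ha).trans ht
  apply div_pos _ (by positivity)
  nlinarith

theorem mul_sqrt_one_add_sq_lt {x y : ℝ} (hx : 0 ≤ x) (hxy : x < y) :
    x * √(1 + y ^ 2) < y * √(1 + x ^ 2) := by
  have hsq : (x * √(1 + y ^ 2)) ^ 2 < (y * √(1 + x ^ 2)) ^ 2 := by
    rw [mul_pow, mul_pow, sq_sqrt (by positivity), sq_sqrt (by positivity)]
    nlinarith
  have hy : 0 ≤ y := hx.trans hxy.le
  exact lt_of_pow_lt_pow_left₀ 2 (by positivity) hsq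

theorem strictMonoOn_coeffB {a : ℝ} (ha : 1 ≤ a ^ 2) :
    StrictMonoOn (fun t : ℝ => ((a ^ 2 - 2) * t ^ 2 - 1) / (2 * t * √(1 + t ^ 2))) (Ioi 0) := by
  intro x (hx : 0 < x) y (hy : 0 < y) hxy
  have hsx : 0 < √(1 + x ^ 2) := sqrt_pos.mpr (by positivity)
  have hsy : 0 < √(1 + y ^ 2) := sqrt_pos.mpr (by positivity)
  have hcross : 0 < y * √(1 + x ^ 2) - x * √(1 + y ^ 2) :=
    sub_pos.mpr (mul_sqrt_one_add_sq_lt hx.le hxy)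
  have hcofactor : 0 < (a ^ 2 - 1) * x * y + √(1 + x ^ 2) * √(1 + y ^ 2) := by
    have : 0 ≤ (a ^ 2 - 1) * x * y := mul_nonneg (mul_nonneg (sub_nonneg.mpr ha) hx.le) hy.le
    positivity
  have hfactor : ((a ^ 2 - 2) * y ^ 2 - 1) * (2 * x * √(1 + x ^ 2))
        - ((a ^ 2 - 2) * x ^ 2 - 1) * (2 * y * √(1 + y ^ 2))
      = 2 * (y * √(1 + x ^ 2) - x * √(1 + y ^ 2))
          * ((a ^ 2 - 1) * x * y + √(1 + x ^ 2) * √(1 + y ^ 2)) := by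
    linear_combination (2 * x * √(1 + x ^ 2)) * sq_sqrt (show (0 : ℝ) ≤ 1 + y ^ 2 by positivity)
      - (2 * y * √(1 + y ^ 2)) * sq_sqrt (show (0 : ℝ) ≤ 1 + x ^ 2 by positivity)
  rw [div_lt_div_iff₀ (by positivity) (by positivity)]
  nlinarith [mul_pos hcross hcofactor]

/-- `A(t) = (a²t² − 1)/(2at)` is strictly increasing and positive on `(1/a, ∞)`,
and consequently the unique solution `t(h)` of `n = A(t)h + B(t)` is strictly
decreasing in `h` (where `B(t) = ((a²−2)t² − 1)/(2t√(1+t²))`). -/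
theorem A_mono_and_t_antitone (a : ℝ) (n : ℕ) (ha : 1 < a) :
    (StrictMonoOn (fun t : ℝ => (a ^ 2 * t ^ 2 - 1) / (2 * a * t)) (Ioi (1 / a)) ∧
      ∀ t ∈ Ioi (1 / a), 0 < (a ^ 2 * t ^ 2 - 1) / (2 * a * t)) ∧
    ∀ h₁ h₂ t₁ t₂ : ℝ, 0 < h₁ → h₁ < h₂ →
      (1 / a < t₁ ∧ (n : ℝ) = (a ^ 2 * t₁ ^ 2 - 1) / (2 * a * t₁) * h₁ +
          ((a ^ 2 - 2) * t₁ ^ 2 - 1) / (2 * t₁ * Real.sqrt (1 + t₁ ^ 2))) →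
      (1 / a < t₂ ∧ (n : ℝ) = (a ^ 2 * t₂ ^ 2 - 1) / (2 * a * t₂) * h₂ +
          ((a ^ 2 - 2) * t₂ ^ 2 - 1) / (2 * t₂ * Real.sqrt (1 + t₂ ^ 2))) →
      t₂ < t₁ := by
  have ha₀ : 0 < a := one_pos.trans ha
  have hsub : Ioi (1 / a) ⊆ Ioi 0 := Ioi_subset_Ioi (one_div_pos.mpr ha₀).le
  have hA_mono := (strictMonoOn_coeffA ha₀).mono hsub
  have hA_pos : ∀ t ∈ Ioi (1 / a), 0 < (a ^ 2 * t ^ 2 - 1) / (2 * a * t) :=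
    fun t ht => coeffA_pos ha₀ ht
  have hB_mono := (strictMonoOn_coeffB (one_le_pow₀ ha.le)).mono hsub
  refine ⟨⟨hA_mono, hA_pos⟩, fun h₁ h₂ t₁ t₂ hh₁ hh ⟨ht₁, he₁⟩ ⟨ht₂, he₂⟩ => ?_⟩
  exact lt_of_mul_add_eq_mul_add hA_mono.monotoneOn hB_mono.monotoneOn hA_pos hh₁.le hh ht₁ ht₂
    (he₁.symm.trans he₂)
end

section
/- For n = 0 and 1 < a ≤ √2, the unique solution t(0,a,h) of the pantographic equation tends to +∞ as h → 0⁺; whereas for a > √2 it tends to 1/√(a²−2) as h → 0⁺. -/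
open Real Filter

/-!
Clearing denominators, the equation reads `h · F(t) = a (1 - (a² - 2) t²)` with
`F(t) = pantographicGrowth a t = (a² t² - 1) √(1 + t²)`, which is positive and increasing on `t > 1/a`.
If `a² ≤ 2` the right side is at least `a`, so `F(t) ≥ a / h → ∞` forces `t → ∞`.
If `a² > 2`, put `L = 1/√(a² - 2)`: positivity of the right side gives `t < L`, and
`a (a² - 2) L (L - t) ≤ a (1 - (a² - 2) t²) = h F(t) ≤ h F(L)` squeezes `t` to `L`.
-/

noncomputable def pantographicGrowth (a x : ℝ) : ℝ := (a ^ 2 * x ^ 2 - 1) * √(1 + x ^ 2)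

lemma pantographicGrowth_pos {a x : ℝ} (hax : 1 < a * x) : 0 < pantographicGrowth a x :=
  mul_pos (by nlinarith) (sqrt_pos.2 (by positivity))

lemma pantographicGrowth_le_of_le {a x y : ℝ} (hx : 0 ≤ x) (hax : 1 ≤ a * x) (hxy : x ≤ y) :
    pantographicGrowth a x ≤ pantographicGrowth a y := by
  have hsq : x ^ 2 ≤ y ^ 2 := pow_le_pow_left₀ hx hxy 2
  have hax2 : 1 ≤ a ^ 2 * x ^ 2 := by nlinarith
  have haxy : a ^ 2 * x ^ 2 ≤ a ^ 2 * y ^ 2 := mul_le_mul_of_nonneg_left hsq (sq_nonneg a)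
  exact mul_le_mul (by linarith) (sqrt_le_sqrt (by linarith)) (sqrt_nonneg _) (by linarith)

lemma mul_pantographicGrowth_eq {a x h : ℝ} (ha : 0 < a) (hx : 0 < x)
    (heq : 0 = (a ^ 2 * x ^ 2 - 1) / (2 * a * x) * h +
      ((a ^ 2 - 2) * x ^ 2 - 1) / (2 * x * √(1 + x ^ 2))) :
    h * pantographicGrowth a x = a * (1 - (a ^ 2 - 2) * x ^ 2) := by
  have hs : 0 < √(1 + x ^ 2) := sqrt_pos.2 (by positivity)
  field_simp at heq
  unfold pantographicGrowth
  nlinarith [heq]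

def SolvesPantographic (a : ℝ) (t : ℝ → ℝ) : Prop :=
  ∀ h, 0 < h → 0 < t h ∧ 1 < a * t h ∧
    h * pantographicGrowth a (t h) = a * (1 - (a ^ 2 - 2) * t h ^ 2)

namespace SolvesPantographic

variable {a : ℝ} {t : ℝ → ℝ}

lemma tendsto_atTop (ht : SolvesPantographic a t) (ha : 0 < a) (ha2 : a ^ 2 ≤ 2) :
    Tendsto t (nhdsWithin 0 (Set.Ioi 0)) atTop := by
  refine Filter.tendsto_atTop.2 fun M => ?_
  have hsmall : ∀ᶠ h in nhdsWithin 0 (Set.Ioi 0), h * pantographicGrowth a M < a := by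
    have : Tendsto (fun h : ℝ => h * pantographicGrowth a M) (nhds 0) (nhds 0) := by
      simpa using (tendsto_id (x := nhds (0 : ℝ))).mul_const (pantographicGrowth a M)
    exact nhdsWithin_le_nhds (this.eventually (gt_mem_nhds ha))
  filter_upwards [hsmall, self_mem_nhdsWithin] with h hsmall hh
  obtain ⟨htpos, hat, heq⟩ := ht h hh
  by_contra! htM
  have hF := pantographicGrowth_le_of_le htpos.le hat.le htM.le
  have hrhs : a ≤ a * (1 - (a ^ 2 - 2) * t h ^ 2) := by
    nlinarith [mul_nonneg ha.le (mul_nonneg (sub_nonneg.2 ha2) (sq_nonneg (t h)))]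
  nlinarith [mul_le_mul_of_nonneg_left hF hh.le]

variable {L : ℝ}

lemma lt_of_mul_sq_eq_one (ht : SolvesPantographic a t) (ha : 0 < a) (hL : 0 < L)
    (hbL : (a ^ 2 - 2) * L ^ 2 = 1) {h : ℝ} (hh : 0 < h) : t h < L := by
  obtain ⟨htpos, hat, heq⟩ := ht h hh
  have hrhs : 0 < a * (1 - (a ^ 2 - 2) * t h ^ 2) :=
    heq ▸ mul_pos hh (pantographicGrowth_pos hat)
  have hb : 0 < a ^ 2 - 2 := by nlinarith
  have hsq : t h ^ 2 < L ^ 2 := by nlinarith [pos_of_mul_pos_right hrhs ha.le]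
  exact lt_of_pow_lt_pow_left₀ 2 hL.le hsq

lemma sub_le_of_mul_sq_eq_one (ht : SolvesPantographic a t) (ha : 0 < a) (hL : 0 < L)
    (hbL : (a ^ 2 - 2) * L ^ 2 = 1) {h : ℝ} (hh : 0 < h) :
    L - h * (pantographicGrowth a L / (a * (a ^ 2 - 2) * L)) ≤ t h := by
  obtain ⟨htpos, hat, heq⟩ := ht h hh
  have htL := ht.lt_of_mul_sq_eq_one ha hL hbL hh
  have hb : 0 < a ^ 2 - 2 := by nlinarith
  -- `1 - b t² = b (L - t)(L + t)` since `b L² = 1`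
  have hgap : a * (a ^ 2 - 2) * L * (L - t h) ≤ a * (1 - (a ^ 2 - 2) * t h ^ 2) := by
    nlinarith [mul_nonneg (mul_nonneg ha.le hb.le) (mul_nonneg htpos.le (sub_nonneg.2 htL.le))]
  have hF := mul_le_mul_of_nonneg_left
    (pantographicGrowth_le_of_le htpos.le hat.le htL.le) hh.le
  rw [mul_div_assoc', sub_le_comm, le_div_iff₀ (by positivity)]
  linarith

lemma tendsto_nhds (ht : SolvesPantographic a t) (ha : 0 < a) (hL : 0 < L)
    (hbL : (a ^ 2 - 2) * L ^ 2 = 1) : Tendsto t (nhdsWithin 0 (Set.Ioi 0)) (nhds L) := by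
  set C := pantographicGrowth a L / (a * (a ^ 2 - 2) * L)
  have hlower : Tendsto (fun h => L - h * C) (nhdsWithin 0 (Set.Ioi 0)) (nhds L) := by
    have hcont : Continuous fun h : ℝ => L - h * C := by fun_prop
    exact (hcont.tendsto' 0 L (by simp)).mono_left nhdsWithin_le_nhds
  refine tendsto_of_tendsto_of_tendsto_of_le_of_le' hlower tendsto_const_nhds ?_ ?_
  · filter_upwards [self_mem_nhdsWithin] with h hh
    exact ht.sub_le_of_mul_sq_eq_one ha hL hbL hh
  · filter_upwards [self_mem_nhdsWithin] with h hh
    exact (ht.lt_of_mul_sq_eq_one ha hL hbL hh).le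

end SolvesPantographic

/-- For `n = 0` and `1 < a ≤ √2`, `t(0,a,h) → +∞` as `h → 0⁺`; whereas for
`a > √2` it tends to `1/√(a²−2)` as `h → 0⁺`. -/
theorem t_zero_limit_h_to_zero (a : ℝ) (ha : 1 < a) (t : ℝ → ℝ)
    (ht : ∀ h : ℝ, 0 < h → 1 / a < t h ∧
      (0 : ℝ) = (a ^ 2 * (t h) ^ 2 - 1) / (2 * a * t h) * h +
        ((a ^ 2 - 2) * (t h) ^ 2 - 1) / (2 * t h * Real.sqrt (1 + (t h) ^ 2))) :
    (a ≤ Real.sqrt 2 → Tendsto t (nhdsWithin 0 (Set.Ioi 0)) atTop) ∧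
    (Real.sqrt 2 < a →
      Tendsto t (nhdsWithin 0 (Set.Ioi 0)) (nhds (1 / Real.sqrt (a ^ 2 - 2)))) := by
  have ha0 : 0 < a := one_pos.trans ha
  have hsol : SolvesPantographic a t := fun h hh => by
    obtain ⟨htl, heq⟩ := ht h hh
    have htpos : 0 < t h := (one_div_pos.2 ha0).trans htl
    exact ⟨htpos, (div_lt_iff₀' ha0).1 htl, mul_pantographicGrowth_eq ha0 htpos heq⟩
  refine ⟨fun ha2 => hsol.tendsto_atTop ha0 ((le_sqrt ha0.le zero_le_two).1 ha2), fun ha2 => ?_⟩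
  have hb : 0 < a ^ 2 - 2 := sub_pos.2 ((sqrt_lt' ha0).1 ha2)
  refine hsol.tendsto_nhds ha0 (by positivity) ?_
  rw [div_pow, sq_sqrt hb.le]
  field_simp
end

section
/- For n = 1: if 1 < a ≤ 2 then t(1,a,h) → +∞ as h → 0⁺, and if a > 2 then t(1,a,h) → 1/√(a(a−2)) as h → 0⁺. -/
open Real Filter

set_option maxHeartbeats 1000000 in
/-- For `n = 1`: if `1 < a ≤ 2` then `t(1,a,h) → +∞` as `h → 0⁺`, and if `a > 2`
then `t(1,a,h) → 1/√(a(a−2))` as `h → 0⁺`. -/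
theorem t_one_limit_h_to_zero (a : ℝ) (ha : 1 < a) (t : ℝ → ℝ)
    (ht : ∀ h : ℝ, 0 < h → 1 / a < t h ∧
      (1 : ℝ) = (a ^ 2 * (t h) ^ 2 - 1) / (2 * a * t h) * h +
        ((a ^ 2 - 2) * (t h) ^ 2 - 1) / (2 * t h * Real.sqrt (1 + (t h) ^ 2))) :
    (a ≤ 2 → Tendsto t (nhdsWithin 0 (Set.Ioi 0)) atTop) ∧
    (2 < a →
      Tendsto t (nhdsWithin 0 (Set.Ioi 0)) (nhds (1 / Real.sqrt (a * (a - 2))))) := by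
  have ha0 : 0 < a := by linarith
  have key : ∀ h : ℝ, 0 < h →
      h * ((a^2*(t h)^2 - 1) * Real.sqrt (1+(t h)^2))
        = a * (2*(t h)*Real.sqrt (1+(t h)^2) + 1 - (a^2-2)*(t h)^2) := by
    intro h hh
    obtain ⟨hT, heq⟩ := ht h hh
    set T := t h with hTdef
    have hT0 : 0 < T := lt_trans (by positivity) hT
    have hs0 : 0 < Real.sqrt (1+T^2) := Real.sqrt_pos.2 (by positivity)
    have hs2 : Real.sqrt (1+T^2) ^ 2 = 1 + T^2 := Real.sq_sqrt (by positivity)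
    field_simp at heq
    nlinarith [heq, hs2, sq_nonneg (Real.sqrt (1+T^2))]
  have hTpos : ∀ h : ℝ, 0 < h → 0 < t h := fun h hh =>
    lt_trans (by positivity) (ht h hh).1
  have hT1 : ∀ h : ℝ, 0 < h → 1 < a^2 * (t h)^2 := by
    intro h hh
    have hT := (ht h hh).1
    have : 1 < a * t h := by
      have := (div_lt_iff₀ ha0).1 hT
      linarith [mul_comm (t h) a]
    nlinarith
  have hNpos : ∀ h : ℝ, 0 < h →
      0 < 2*(t h)*Real.sqrt (1+(t h)^2) + 1 - (a^2-2)*(t h)^2 := by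
    intro h hh
    have hk := key h hh
    have hs0 : 0 < Real.sqrt (1+(t h)^2) := Real.sqrt_pos.2 (by positivity)
    have h1 := hT1 h hh
    have hlhs : 0 < a * (2*(t h)*Real.sqrt (1+(t h)^2) + 1 - (a^2-2)*(t h)^2) := by
      rw [← hk]
      exact mul_pos hh (mul_pos (by linarith) hs0)
    nlinarith [hlhs, ha0]
  constructor
  · -- a ≤ 2 : t → ∞
    intro ha2
    rw [tendsto_atTop]
    intro M
    set M' : ℝ := max M 1 with hM'
    have hM'1 : 1 ≤ M' := le_max_right M 1
    have hM'0 : 0 < M' := by linarith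
    set h₀ : ℝ := a / (a^2*M'^2*(1+M')) with hh₀
    have hh₀pos : 0 < h₀ := by positivity
    rw [eventually_iff_exists_mem]
    refine ⟨Set.Ioo 0 h₀, Ioo_mem_nhdsGT_of_mem ⟨le_refl 0, hh₀pos⟩, ?_⟩
    rintro h ⟨hh, hhlt⟩
    by_contra hcon
    push_neg at hcon
    have hTM : t h ≤ M' := le_trans (le_of_lt hcon) (le_max_left M 1)
    set T := t h with hTdef
    have hT0 : 0 < T := hTpos h hh
    have hs0 : 0 < Real.sqrt (1+T^2) := Real.sqrt_pos.2 (by positivity)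
    have hs2 : Real.sqrt (1+T^2) ^ 2 = 1 + T^2 := Real.sq_sqrt (by positivity)
    have hsT : T ≤ Real.sqrt (1+T^2) := by nlinarith [hs2, hs0]
    have hN1 : 1 ≤ 2*T*Real.sqrt (1+T^2) + 1 - (a^2-2)*T^2 := by
      nlinarith [mul_le_mul_of_nonneg_left hsT (by positivity : (0:ℝ) ≤ 2*T),
        mul_nonneg (mul_nonneg (by linarith : (0:ℝ) ≤ 2-a)
          (by linarith : (0:ℝ) ≤ 2+a)) (sq_nonneg T)]
    have hsM : Real.sqrt (1+T^2) ≤ 1 + M' := by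
      rw [show (1+M') = Real.sqrt ((1+M')^2) from (Real.sqrt_sq (by positivity)).symm]
      apply Real.sqrt_le_sqrt
      nlinarith
    have hk := key h hh
    have h1 := hT1 h hh
    have hub : (a^2*T^2 - 1) * Real.sqrt (1+T^2) ≤ a^2*M'^2*(1+M') := by
      have hT2 : T^2 ≤ M'^2 := by nlinarith
      have hb : a^2*T^2 - 1 ≤ a^2*M'^2 := by
        nlinarith [mul_le_mul_of_nonneg_left hT2 (sq_nonneg a)]
      calc (a^2*T^2 - 1) * Real.sqrt (1+T^2) ≤ (a^2*M'^2) * (1+M') :=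
            mul_le_mul hb hsM (le_of_lt hs0) (by positivity)
        _ = a^2*M'^2*(1+M') := by ring
    have hch : a ≤ h * (a^2*M'^2*(1+M')) := by
      calc a = a * 1 := by ring
        _ ≤ a * (2*T*Real.sqrt (1+T^2) + 1 - (a^2-2)*T^2) :=
              mul_le_mul_of_nonneg_left hN1 (le_of_lt ha0)
        _ = h * ((a^2*T^2 - 1) * Real.sqrt (1+T^2)) := hk.symm
        _ ≤ h * (a^2*M'^2*(1+M')) := mul_le_mul_of_nonneg_left hub (le_of_lt hh)
    have hlt : h * (a^2*M'^2*(1+M')) < h₀ * (a^2*M'^2*(1+M')) :=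
      mul_lt_mul_of_pos_right hhlt (by positivity)
    rw [hh₀, div_mul_cancel₀ _ (by positivity : (a^2*M'^2*(1+M')) ≠ 0)] at hlt
    linarith
  · -- a > 2 : t → t*
    intro ha2
    have haa : 0 < a*(a-2) := by nlinarith
    have hq0 : 0 < Real.sqrt (a*(a-2)) := Real.sqrt_pos.2 haa
    have hq2 : Real.sqrt (a*(a-2))^2 = a*(a-2) := Real.sq_sqrt (le_of_lt haa)
    set ts : ℝ := 1 / Real.sqrt (a*(a-2)) with hts
    have hts0 : 0 < ts := by positivity
    have hts2 : a*(a-2)*ts^2 = 1 := by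
      rw [hts, div_pow, one_pow, hq2]
      field_simp
      exact div_self (by linarith)
    have hupper : ∀ h : ℝ, 0 < h → t h < ts := by
      intro h hh
      by_contra hcon
      push_neg at hcon
      set T := t h with hTdef
      have hT0 : 0 < T := hTpos h hh
      have hs0 : 0 < Real.sqrt (1+T^2) := Real.sqrt_pos.2 (by positivity)
      have hs2 : Real.sqrt (1+T^2) ^ 2 = 1 + T^2 := Real.sq_sqrt (by positivity)
      set s := Real.sqrt (1+T^2) with hsdef
      have hge : 1 ≤ a*(a-2)*T^2 := by
        have : ts^2 ≤ T^2 := by nlinarith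
        nlinarith [hts2]
      have hN := hNpos h hh
      rw [← hTdef, ← hsdef] at hN
      have hR : 0 ≤ (a^2-2)*T^2 - 1 := by nlinarith
      have h2 : 0 ≤ a*(a+2)*T^2 - 1 := by nlinarith
      have hP : 0 ≤ (a*(a-2)*T^2-1)*(a*(a+2)*T^2-1) := mul_nonneg (by linarith) h2
      have hsum : 0 < 2*T*s + ((a^2-2)*T^2 - 1) := by nlinarith [mul_pos hT0 hs0]
      nlinarith [mul_pos hN hsum]
    have hNfun : ∀ T : ℝ, 0 < T → T < ts →
        0 < 2*T*Real.sqrt (1+T^2) + 1 - (a^2-2)*T^2 := by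
      intro T hT0 hTts
      have hs0 : 0 < Real.sqrt (1+T^2) := Real.sqrt_pos.2 (by positivity)
      have hs2 : Real.sqrt (1+T^2) ^ 2 = 1 + T^2 := Real.sq_sqrt (by positivity)
      set s := Real.sqrt (1+T^2) with hsdef
      have hlt : a*(a-2)*T^2 < 1 := by nlinarith [hts2]
      rcases lt_or_ge ((a^2-2)*T^2) 1 with hc | hc
      · nlinarith [mul_pos hT0 hs0]
      · have h2 : 0 < a*(a+2)*T^2 - 1 := by nlinarith
        nlinarith [mul_pos hT0 hs0, sq_nonneg (2*T*s - ((a^2-2)*T^2-1)),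
          mul_pos (mul_pos hT0 hs0) (mul_pos hT0 hs0)]
    rw [Metric.tendsto_nhdsWithin_nhds]
    intro ε hε
    rcases le_or_gt (ts - ε) (1/a) with hcase | hcase
    · refine ⟨1, one_pos, ?_⟩
      intro h hmem _
      have hh : 0 < h := hmem
      have h1 := (ht h hh).1
      have h2 := hupper h hh
      rw [Real.dist_eq, abs_lt]
      exact ⟨by linarith, by linarith⟩
    · have hcont : Continuous (fun T : ℝ => 2*T*Real.sqrt (1+T^2) + 1 - (a^2-2)*T^2) := by
        fun_prop
      have hKne : (Set.Icc (1/a) (ts - ε)).Nonempty := ⟨1/a, le_refl _, le_of_lt hcase⟩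
      obtain ⟨t₀, ht₀, hmin⟩ := isCompact_Icc.exists_isMinOn hKne hcont.continuousOn
      have ht₀0 : 0 < t₀ := lt_of_lt_of_le (by positivity) ht₀.1
      have ht₀ts : t₀ < ts := lt_of_le_of_lt ht₀.2 (by linarith)
      have hδ : 0 < 2*t₀*Real.sqrt (1+t₀^2) + 1 - (a^2-2)*t₀^2 := hNfun t₀ ht₀0 ht₀ts
      set δ : ℝ := 2*t₀*Real.sqrt (1+t₀^2) + 1 - (a^2-2)*t₀^2 with hδdef
      have hden : 0 < a^2*ts^2*(1+ts) := by positivity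
      refine ⟨a*δ / (a^2*ts^2*(1+ts)), div_pos (mul_pos ha0 hδ) hden, ?_⟩
      intro h hmem hdist
      have hh : 0 < h := hmem
      have hhlt : h < a*δ / (a^2*ts^2*(1+ts)) := by
        rw [Real.dist_eq, sub_zero] at hdist
        exact lt_of_le_of_lt (le_abs_self h) hdist
      have hup := hupper h hh
      rw [Real.dist_eq, abs_lt]
      refine ⟨?_, by linarith⟩
      by_contra hcon
      push_neg at hcon
      have hTK : t h ∈ Set.Icc (1/a) (ts - ε) :=
        ⟨le_of_lt (ht h hh).1, by linarith⟩
      have hNlb : δ ≤ 2*(t h)*Real.sqrt (1+(t h)^2) + 1 - (a^2-2)*(t h)^2 := hmin hTK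
      set T := t h with hTdef
      have hT0 : 0 < T := hTpos h hh
      have hs0 : 0 < Real.sqrt (1+T^2) := Real.sqrt_pos.2 (by positivity)
      have hs2 : Real.sqrt (1+T^2) ^ 2 = 1 + T^2 := Real.sq_sqrt (by positivity)
      have hk := key h hh
      have h1 := hT1 h hh
      have hsM : Real.sqrt (1+T^2) ≤ 1 + ts := by
        rw [show (1+ts) = Real.sqrt ((1+ts)^2) from (Real.sqrt_sq (by positivity)).symm]
        apply Real.sqrt_le_sqrt
        nlinarith
      have hub : (a^2*T^2 - 1) * Real.sqrt (1+T^2) ≤ a^2*ts^2*(1+ts) := by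
        have hT2 : T^2 ≤ ts^2 := by nlinarith
        have hb : a^2*T^2 - 1 ≤ a^2*ts^2 := by
          nlinarith [mul_le_mul_of_nonneg_left hT2 (sq_nonneg a)]
        calc (a^2*T^2 - 1) * Real.sqrt (1+T^2) ≤ (a^2*ts^2) * (1+ts) :=
              mul_le_mul hb hsM (le_of_lt hs0) (by positivity)
          _ = a^2*ts^2*(1+ts) := by ring
      have hchain : a*δ ≤ h * (a^2*ts^2*(1+ts)) := by
        calc a*δ ≤ a * (2*T*Real.sqrt (1+T^2) + 1 - (a^2-2)*T^2) :=
              mul_le_mul_of_nonneg_left hNlb (le_of_lt ha0)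
          _ = h * ((a^2*T^2 - 1) * Real.sqrt (1+T^2)) := hk.symm
          _ ≤ h * (a^2*ts^2*(1+ts)) := mul_le_mul_of_nonneg_left hub (le_of_lt hh)
      have hlt2 : h * (a^2*ts^2*(1+ts)) < a*δ / (a^2*ts^2*(1+ts)) * (a^2*ts^2*(1+ts)) :=
        mul_lt_mul_of_pos_right hhlt hden
      rw [div_mul_cancel₀ _ (ne_of_gt hden)] at hlt2
      linarith
end

section
/- For every a > 2 and integer n ≥ 1, the value t = 1/√(a(a−2)) solves the pantographic equation n = ((a²t²−1)/(2at))·h + (((a²−2)t²−1)/(2t√(1+t²))) exactly when h = (n−1)√(a(a−2)). -/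
open Real

/-- For `a > 2` and integer `n ≥ 1`, the value `t = 1/√(a(a−2))` solves the
pantographic equation exactly when `h = (n−1)√(a(a−2))`. -/
theorem t_boundary_value_iff (a h : ℝ) (n : ℕ) (ha : 2 < a) (hn : 1 ≤ n) (hh : 0 ≤ h) :
    ((n : ℝ) = (a ^ 2 * (1 / Real.sqrt (a * (a - 2))) ^ 2 - 1) /
          (2 * a * (1 / Real.sqrt (a * (a - 2)))) * h +
        ((a ^ 2 - 2) * (1 / Real.sqrt (a * (a - 2))) ^ 2 - 1) /
          (2 * (1 / Real.sqrt (a * (a - 2))) *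
            Real.sqrt (1 + (1 / Real.sqrt (a * (a - 2))) ^ 2))) ↔
      h = ((n : ℝ) - 1) * Real.sqrt (a * (a - 2)) := by
  set s := Real.sqrt (a * (a - 2)) with hsdef
  have hapos : 0 < a * (a - 2) := by nlinarith
  have hs : 0 < s := Real.sqrt_pos.mpr hapos
  have hs2 : s ^ 2 = a * (a - 2) := Real.sq_sqrt hapos.le
  have hsq : Real.sqrt (1 + (1 / s) ^ 2) = (a - 1) / s := by
    rw [show 1 + (1 / s) ^ 2 = ((a - 1) / s) ^ 2 by field_simp; nlinarith]
    exact Real.sqrt_sq (div_nonneg (by linarith) hs.le)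
  rw [hsq]
  rw [show (a ^ 2 * (1 / s) ^ 2 - 1) / (2 * a * (1 / s)) = 1 / s by
        field_simp; nlinarith,
      show ((a ^ 2 - 2) * (1 / s) ^ 2 - 1) / (2 * (1 / s) * ((a - 1) / s)) = 1 by
        have ha1 : (0:ℝ) < a - 1 := by linarith
        field_simp; nlinarith]
  constructor
  · intro hEq
    field_simp at hEq
    nlinarith
  · intro hEq
    rw [hEq]
    field_simp
    ring
end

section
/- For n ≥ 2 and a > 2, the pantographic orbit Pan(n,a,h) satisfies the geometric constraint 1/a < t(n,a,h) ≤ 1/√(a(a−2)) if and only if h ≥ (n−1)√(a(a−2)); consequently Pan(n,a,h) exists for all h > (n−1)√(a(a−2)). -/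
/-!
Write the defining equation as `n = f(t) h + g(t)`. The coefficient `f` is increasing in `t`,
and at the critical value `t₀ = 1/√(a(a-2))` one has `f(t₀) = t₀` and `g(t₀) = 1`; moreover
`g ≤ 1` on `(1/a, t₀]` and `g ≥ 1` on `[t₀, ∞)`. Hence `t ≤ t₀` forces `n ≤ h/√(a(a-2)) + 1`,
while `t > t₀` forces `n > h/√(a(a-2)) + 1`.
-/

open Real Set

namespace Pantograph

/-- The coefficient of `h` in the equation `n = panCoeff a t * h + panOffset a t` defining `t`. -/
noncomputable def panCoeff (a T : ℝ) : ℝ := (a ^ 2 * T ^ 2 - 1) / (2 * a * T)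

noncomputable def panOffset (a T : ℝ) : ℝ := ((a ^ 2 - 2) * T ^ 2 - 1) / (2 * T * √(1 + T ^ 2))

variable {a T : ℝ}

lemma le_one_div_sqrt_iff {c : ℝ} (hT : 0 < T) (hc : 0 < c) : T ≤ 1 / √c ↔ c * T ^ 2 ≤ 1 := by
  rw [le_div_iff₀ (sqrt_pos.2 hc), ← sq_le_one_iff₀ (by positivity), mul_pow, sq_sqrt hc.le,
    mul_comm]

lemma panCoeff_strictMonoOn (ha : 0 < a) : StrictMonoOn (panCoeff a) (Ioi 0) := by
  intro x (hx : 0 < x) y (hy : 0 < y) hxy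
  unfold panCoeff
  rw [div_lt_div_iff₀ (by positivity) (by positivity)]
  nlinarith [mul_pos (mul_pos (sub_pos.2 hxy) (by positivity : 0 < a ^ 2 * x * y + 1)) ha]

lemma panCoeff_one_div_sqrt (ha : 2 < a) :
    panCoeff a (1 / √(a * (a - 2))) = 1 / √(a * (a - 2)) := by
  have hs0 : 0 < √(a * (a - 2)) := sqrt_pos.2 (by nlinarith)
  have hs2 : √(a * (a - 2)) ^ 2 = a * (a - 2) := sq_sqrt (by nlinarith)
  unfold panCoeff
  field_simp
  linear_combination -hs2

/-- So the sign of `a(a-2)T² - 1` decides on which side of `1` the value `panOffset a T` lies. -/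
lemma panOffset_num_sq_sub_den_sq (T : ℝ) :
    ((a ^ 2 - 2) * T ^ 2 - 1) ^ 2 - (2 * T * √(1 + T ^ 2)) ^ 2
      = (a * (a - 2) * T ^ 2 - 1) * (a * (a + 2) * T ^ 2 - 1) := by
  rw [mul_pow, sq_sqrt (by positivity)]
  ring

lemma panOffset_le_one (ha : 2 < a) (hTa : 1 / a < T) (hT : a * (a - 2) * T ^ 2 ≤ 1) :
    panOffset a T ≤ 1 := by
  have hT0 : 0 < T := lt_trans (by positivity) hTa
  have haT : 1 < a * T := by rwa [div_lt_iff₀ (by linarith), mul_comm] at hTa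
  have hT' : 1 ≤ a * (a + 2) * T ^ 2 := by nlinarith
  unfold panOffset
  rw [div_le_one (by positivity)]
  refine le_of_sq_le_sq ?_ (by positivity)
  nlinarith [panOffset_num_sq_sub_den_sq (a := a) T,
    mul_nonneg (sub_nonneg.2 hT) (sub_nonneg.2 hT')]

lemma one_le_panOffset (ha : 2 < a) (hT0 : 0 < T) (hT : 1 ≤ a * (a - 2) * T ^ 2) :
    1 ≤ panOffset a T := by
  have hT' : 1 ≤ a * (a + 2) * T ^ 2 := by nlinarith
  unfold panOffset
  rw [one_le_div (by positivity)]
  refine le_of_sq_le_sq ?_ (by nlinarith)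
  nlinarith [panOffset_num_sq_sub_den_sq (a := a) T,
    mul_nonneg (sub_nonneg.2 hT) (sub_nonneg.2 hT')]

lemma le_one_div_sqrt_iff_of_eq {n h : ℝ} (ha : 2 < a) (hTa : 1 / a < T) (h0 : 0 < h)
    (heq : n = panCoeff a T * h + panOffset a T) :
    T ≤ 1 / √(a * (a - 2)) ↔ (n - 1) * √(a * (a - 2)) ≤ h := by
  have hc : 0 < a * (a - 2) := by nlinarith
  have hT0 : 0 < T := lt_trans (by positivity) hTa
  have hs0 : 0 < 1 / √(a * (a - 2)) := by positivity
  rw [← le_div_iff₀ (sqrt_pos.2 hc), div_eq_mul_one_div h, mul_comm h]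
  constructor
  · intro hT
    have hf : panCoeff a T ≤ 1 / √(a * (a - 2)) := panCoeff_one_div_sqrt ha ▸
      (panCoeff_strictMonoOn (by linarith)).monotoneOn hT0 hs0 hT
    have hg := panOffset_le_one ha hTa ((le_one_div_sqrt_iff hT0 hc).1 hT)
    linarith [mul_le_mul_of_nonneg_right hf h0.le]
  · intro hn
    by_contra! hT
    have hf : 1 / √(a * (a - 2)) < panCoeff a T := panCoeff_one_div_sqrt ha ▸
      panCoeff_strictMonoOn (by linarith) hs0 hT0 hT
    have hcT : 1 < a * (a - 2) * T ^ 2 :=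
      not_le.1 <| (le_one_div_sqrt_iff hT0 hc).not.1 hT.not_ge
    have hg := one_le_panOffset ha hT0 hcT.le
    linarith [mul_lt_mul_of_pos_right hf h0]

end Pantograph

open Pantograph in
/-- For `n ≥ 2` and `a > 2`, the pantographic orbit satisfies the geometric
constraint `t(n,a,h) ≤ 1/√(a(a−2))` if and only if `h ≥ (n−1)√(a(a−2))`;
consequently `Pan(n,a,h)` exists for all `h > (n−1)√(a(a−2))`. -/
theorem pan_exists_iff (a : ℝ) (n : ℕ) (ha : 2 < a) (hn : 2 ≤ n) (t : ℝ → ℝ)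
    (ht : ∀ h : ℝ, 0 < h → 1 / a < t h ∧
      (n : ℝ) = (a ^ 2 * (t h) ^ 2 - 1) / (2 * a * t h) * h +
        ((a ^ 2 - 2) * (t h) ^ 2 - 1) / (2 * t h * Real.sqrt (1 + (t h) ^ 2))) :
    (∀ h : ℝ, 0 < h →
      (t h ≤ 1 / Real.sqrt (a * (a - 2)) ↔ ((n : ℝ) - 1) * Real.sqrt (a * (a - 2)) ≤ h)) ∧
    ∀ h : ℝ, ((n : ℝ) - 1) * Real.sqrt (a * (a - 2)) < h →
      1 / a < t h ∧ t h ≤ 1 / Real.sqrt (a * (a - 2)) := by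
  have key (h : ℝ) (h0 : 0 < h) :
      t h ≤ 1 / √(a * (a - 2)) ↔ ((n : ℝ) - 1) * √(a * (a - 2)) ≤ h :=
    le_one_div_sqrt_iff_of_eq ha (ht h h0).1 h0 (ht h h0).2
  refine ⟨key, fun h hlt => ?_⟩
  have hn1 : (0 : ℝ) ≤ n - 1 := by
    have : (2 : ℝ) ≤ n := by exact_mod_cast hn
    linarith
  have h0 : 0 < h := lt_of_le_of_lt (by positivity) hlt
  exact ⟨(ht h h0).1, (key h h0).2 hlt.le⟩
end

section
/- Define δ₁(a,h) = 2(1 + t²)/(1 + a²t²) − 1, where t = t(n,a,h) is the pantographic solution. Then for fixed a > 1, δ₁ is a strictly increasing function of h; moreover for 1 < a < √2 one has δ₁(a,h) > 0 for all h > 0, and δ₁ → 2/a² − 1 as h → 0⁺. -/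
open Real Filter Set

private lemma sqrt_facts (x : ℝ) (hx : 0 < x) :
    0 < Real.sqrt (1 + x ^ 2) ∧ x < Real.sqrt (1 + x ^ 2) ∧
      (Real.sqrt (1 + x ^ 2)) ^ 2 = 1 + x ^ 2 := by
  have h2 : (Real.sqrt (1 + x ^ 2)) ^ 2 = 1 + x ^ 2 := Real.sq_sqrt (by positivity)
  have h1 : 0 < Real.sqrt (1 + x ^ 2) := Real.sqrt_pos.mpr (by positivity)
  refine ⟨h1, ?_, h2⟩
  nlinarith [h2, h1, sq_nonneg (Real.sqrt (1 + x ^ 2) - x)]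

private lemma Amono (a x y : ℝ) (ha : 0 < a) (hx : 0 < x) (hxy : x ≤ y) :
    (a ^ 2 * x ^ 2 - 1) / (2 * a * x) ≤ (a ^ 2 * y ^ 2 - 1) / (2 * a * y) := by
  have hy : 0 < y := lt_of_lt_of_le hx hxy
  rw [div_le_div_iff₀ (by positivity) (by positivity)]
  nlinarith [mul_nonneg (sub_nonneg.2 hxy) (by positivity : (0:ℝ) ≤ a ^ 2 * x * y + 1), ha]

private lemma Bmono (a x y : ℝ) (ha : 1 ≤ a) (hx : 0 < x) (hxy : x ≤ y) :
    ((a ^ 2 - 2) * x ^ 2 - 1) / (2 * x * Real.sqrt (1 + x ^ 2)) ≤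
      ((a ^ 2 - 2) * y ^ 2 - 1) / (2 * y * Real.sqrt (1 + y ^ 2)) := by
  have hy : 0 < y := lt_of_lt_of_le hx hxy
  obtain ⟨hP, hxP, hP2⟩ := sqrt_facts x hx
  obtain ⟨hQ, hyQ, hQ2⟩ := sqrt_facts y hy
  set P := Real.sqrt (1 + x ^ 2)
  set Q := Real.sqrt (1 + y ^ 2)
  rw [div_le_div_iff₀ (by positivity) (by positivity)]
  have key : (y * P - x * Q) * (y * P + x * Q) = y ^ 2 - x ^ 2 := by
    linear_combination y ^ 2 * hP2 - x ^ 2 * hQ2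
  have hyP : 0 ≤ y * P - x * Q := by
    nlinarith [key, mul_pos hy hP, mul_pos hx hQ, sq_nonneg (x + y)]
  have hid : ((a ^ 2 - 2) * y ^ 2 - 1) * (x * P) - ((a ^ 2 - 2) * x ^ 2 - 1) * (y * Q) =
      (y * P - x * Q) * (P * Q + (a ^ 2 - 1) * x * y) := by
    linear_combination (x * P) * hQ2 - (y * Q) * hP2
  have hpos : 0 ≤ P * Q + (a ^ 2 - 1) * x * y := by nlinarith [mul_pos hP hQ, mul_pos hx hy]
  nlinarith [hid, mul_nonneg hyP hpos]

private lemma Bupper (a τ : ℝ) (ha : 1 < a) (ha2 : a ^ 2 < 2) (hτ : 0 < τ) :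
    ((a ^ 2 - 2) * τ ^ 2 - 1) / (2 * τ * Real.sqrt (1 + τ ^ 2)) < (a ^ 2 - 2) / 2 := by
  obtain ⟨hS, hτS, hS2⟩ := sqrt_facts τ hτ
  set S := Real.sqrt (1 + τ ^ 2)
  rw [div_lt_div_iff₀ (by positivity) two_pos]
  have h1 : τ * (S - τ) < 1 := by nlinarith [mul_pos hτ hS]
  have h2 : 0 ≤ (a ^ 2 - 1) * (τ * (S - τ)) := by
    apply mul_nonneg (by nlinarith) (by nlinarith [mul_pos hτ hS])
  nlinarith [h1, h2]

/-- With `t(n,a,h)` the pantographic solution, `δ₁(a,h) = 2(1+t²)/(1+a²t²) − 1`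
is strictly increasing in `h`; moreover for `1 < a < √2` one has `δ₁ > 0` for
all `h > 0`, and `δ₁ → 2/a² − 1` as `h → 0⁺`. -/
theorem delta1_properties (a : ℝ) (n : ℕ) (ha : 1 < a) (t : ℝ → ℝ)
    (ht : ∀ h : ℝ, 0 < h → 1 / a < t h ∧
      (n : ℝ) = (a ^ 2 * (t h) ^ 2 - 1) / (2 * a * t h) * h +
        ((a ^ 2 - 2) * (t h) ^ 2 - 1) / (2 * t h * Real.sqrt (1 + (t h) ^ 2))) :
    StrictMonoOn (fun h => 2 * (1 + (t h) ^ 2) / (1 + a ^ 2 * (t h) ^ 2) - 1) (Ioi 0) ∧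
    (a < Real.sqrt 2 →
      (∀ h : ℝ, 0 < h → 0 < 2 * (1 + (t h) ^ 2) / (1 + a ^ 2 * (t h) ^ 2) - 1) ∧
      Tendsto (fun h => 2 * (1 + (t h) ^ 2) / (1 + a ^ 2 * (t h) ^ 2) - 1)
        (nhdsWithin 0 (Ioi 0)) (nhds (2 / a ^ 2 - 1))) := by
  have ha0 : (0:ℝ) < a := lt_trans one_pos ha
  have hainv : (0:ℝ) < 1 / a := by positivity
  have htpos : ∀ h : ℝ, 0 < h → 0 < t h := fun h hh => lt_trans hainv (ht h hh).1
  have hApos : ∀ h : ℝ, 0 < h → 0 < (a ^ 2 * (t h) ^ 2 - 1) / (2 * a * t h) := by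
    intro h hh
    have h1 := (ht h hh).1
    have h2 := htpos h hh
    have : 1 < a * t h := by
      rw [div_lt_iff₀ ha0] at h1; nlinarith
    apply div_pos (by nlinarith) (by positivity)
  -- t is strictly antitone on (0, ∞)
  have tanti : ∀ h₁ h₂ : ℝ, 0 < h₁ → h₁ < h₂ → t h₂ < t h₁ := by
    intro h₁ h₂ hh₁ h12
    have hh₂ : 0 < h₂ := hh₁.trans h12
    obtain ⟨hx1, ex⟩ := ht h₁ hh₁
    obtain ⟨hy1, ey⟩ := ht h₂ hh₂
    have hx : 0 < t h₁ := htpos h₁ hh₁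
    by_contra hc
    push_neg at hc  -- t h₁ ≤ t h₂
    have hA := Amono a (t h₁) (t h₂) ha0 hx hc
    have hB := Bmono a (t h₁) (t h₂) ha.le hx hc
    have hAp := hApos h₁ hh₁
    have : (n : ℝ) < (n : ℝ) := by
      calc (n : ℝ) = (a ^ 2 * (t h₁) ^ 2 - 1) / (2 * a * t h₁) * h₁ +
            ((a ^ 2 - 2) * (t h₁) ^ 2 - 1) / (2 * t h₁ * Real.sqrt (1 + (t h₁) ^ 2)) := ex
        _ < (a ^ 2 * (t h₁) ^ 2 - 1) / (2 * a * t h₁) * h₂ +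
            ((a ^ 2 - 2) * (t h₁) ^ 2 - 1) / (2 * t h₁ * Real.sqrt (1 + (t h₁) ^ 2)) := by
            have := mul_lt_mul_of_pos_left h12 hAp
            linarith
        _ ≤ (a ^ 2 * (t h₂) ^ 2 - 1) / (2 * a * t h₂) * h₂ +
            ((a ^ 2 - 2) * (t h₂) ^ 2 - 1) / (2 * t h₂ * Real.sqrt (1 + (t h₂) ^ 2)) := by
            have := mul_le_mul_of_nonneg_right hA hh₂.le
            linarith
        _ = (n : ℝ) := ey.symm
    exact lt_irrefl _ this
  constructor
  · -- strict monotonicity of δ₁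
    intro h₁ hh₁ h₂ hh₂ h12
    simp only [mem_Ioi] at hh₁ hh₂
    have hy : 0 < t h₂ := htpos h₂ hh₂
    have hyx : t h₂ < t h₁ := tanti h₁ h₂ hh₁ h12
    have : 2 * (1 + (t h₁) ^ 2) / (1 + a ^ 2 * (t h₁) ^ 2) <
        2 * (1 + (t h₂) ^ 2) / (1 + a ^ 2 * (t h₂) ^ 2) := by
      rw [div_lt_div_iff₀ (by positivity) (by positivity)]
      have hx : 0 < t h₁ := hy.trans hyx
      nlinarith [mul_pos (show (0:ℝ) < a ^ 2 - 1 by nlinarith)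
        (show (0:ℝ) < (t h₁) ^ 2 - (t h₂) ^ 2 by nlinarith)]
    simpa using sub_lt_sub_right this 1
  · intro hsq
    have ha2 : a ^ 2 < 2 := by
      have := Real.sq_sqrt (by norm_num : (2:ℝ) ≥ 0)
      nlinarith [Real.sqrt_nonneg 2, Real.sq_sqrt (by norm_num : (0:ℝ) ≤ 2)]
    constructor
    · intro h hh
      have h2 := htpos h hh
      have : 1 < 2 * (1 + (t h) ^ 2) / (1 + a ^ 2 * (t h) ^ 2) := by
        rw [lt_div_iff₀ (by positivity)]
        nlinarith [sq_nonneg (t h)]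
      linarith
    · -- the limit as h → 0⁺
      have hc : (0:ℝ) < (2 - a ^ 2) / 2 := by linarith
      have hlow : ∀ h : ℝ, 0 < h → ((2 - a ^ 2) / a) * h⁻¹ ≤ t h := by
        intro h hh
        obtain ⟨h1, heq⟩ := ht h hh
        have hτ : 0 < t h := htpos h hh
        have hBu := Bupper a (t h) ha ha2 hτ
        have hn : (0:ℝ) ≤ (n : ℝ) := Nat.cast_nonneg n
        have hAh : (2 - a ^ 2) / 2 < (a ^ 2 * (t h) ^ 2 - 1) / (2 * a * t h) * h := by
          nlinarith [hBu, heq]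
        have hAle : (a ^ 2 * (t h) ^ 2 - 1) / (2 * a * t h) < a * t h / 2 := by
          rw [div_lt_div_iff₀ (by positivity) two_pos]
          nlinarith
        have : (2 - a ^ 2) / 2 < a * t h / 2 * h := by
          have := mul_lt_mul_of_pos_right hAle hh
          linarith
        have h3 : 2 - a ^ 2 < a * t h * h := by linarith
        have heqq : ((2 - a ^ 2) / a) * h⁻¹ = (2 - a ^ 2) / (a * h) := by field_simp
        rw [heqq]
        exact le_of_lt ((div_lt_iff₀ (by positivity)).mpr (by nlinarith))
      have htop : Tendsto t (nhdsWithin 0 (Ioi 0)) atTop := by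
        refine tendsto_atTop_mono' (nhdsWithin 0 (Ioi 0)) ?_
          (Tendsto.const_mul_atTop (div_pos (by linarith : (0:ℝ) < 2 - a ^ 2) ha0)
            tendsto_inv_nhdsGT_zero)
        filter_upwards [self_mem_nhdsWithin] with h hh
        exact hlow h hh
      have hcont : Tendsto (fun v : ℝ => (2 * v ^ 2 + 2) / (v ^ 2 + a ^ 2) - 1) (nhds 0)
          (nhds (2 / a ^ 2 - 1)) := by
        have hC : ContinuousAt (fun v : ℝ => (2 * v ^ 2 + 2) / (v ^ 2 + a ^ 2) - 1) 0 := by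
          apply ContinuousAt.sub _ continuousAt_const
          apply ContinuousAt.div (by fun_prop) (by fun_prop)
          positivity
        have h0 : (2 * (0:ℝ) ^ 2 + 2) / ((0:ℝ) ^ 2 + a ^ 2) - 1 = 2 / a ^ 2 - 1 := by norm_num
        simpa [h0] using hC.tendsto
      have glim : Tendsto (fun u : ℝ => 2 * (1 + u ^ 2) / (1 + a ^ 2 * u ^ 2) - 1) atTop
          (nhds (2 / a ^ 2 - 1)) := by
        have := hcont.comp tendsto_inv_atTop_zero
        apply this.congr'
        filter_upwards [eventually_gt_atTop (0:ℝ)] with u hu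
        have hu' : u ≠ 0 := ne_of_gt hu
        simp only [Function.comp_apply]
        field_simp
      exact glim.comp htop
end

section
/- For n ≥ 0 and a ≥ √2, the pantographic solution satisfies: t(n,a,h) = 1/√(a²−2) if and only if h = n·a·√(a²−2). Consequently δ₁(a, n a√(a²−2)) = 0. -/
open Real

lemma mono_aux (a h : ℝ) (ha0 : 0 < a) (ha2 : 2 ≤ a ^ 2) (hh : 0 < h)
    {s t : ℝ} (hs : 0 < s) (hst : s < t) :
    (a ^ 2 * s ^ 2 - 1) / (2 * a * s) * h +
      ((a ^ 2 - 2) * s ^ 2 - 1) / (2 * s * Real.sqrt (1 + s ^ 2)) <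
    (a ^ 2 * t ^ 2 - 1) / (2 * a * t) * h +
      ((a ^ 2 - 2) * t ^ 2 - 1) / (2 * t * Real.sqrt (1 + t ^ 2)) := by
  have ht0 : 0 < t := hs.trans hst
  set u := Real.sqrt (1 + s ^ 2) with hu
  set v := Real.sqrt (1 + t ^ 2) with hv
  have hu2 : u ^ 2 = 1 + s ^ 2 := Real.sq_sqrt (by positivity)
  have hv2 : v ^ 2 = 1 + t ^ 2 := Real.sq_sqrt (by positivity)
  have hu0 : 0 < u := by rw [hu]; exact Real.sqrt_pos.mpr (by positivity)
  have hv0 : 0 < v := by rw [hv]; exact Real.sqrt_pos.mpr (by positivity)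
  have huv : u < v := by
    rw [hu, hv]
    exact Real.sqrt_lt_sqrt (by positivity) (by nlinarith)
  have h1 : s * v ≤ t * u := by
    have hsq : (s * v) ^ 2 ≤ (t * u) ^ 2 := by nlinarith [sq_nonneg (s - t)]
    nlinarith [mul_pos hs hv0, mul_pos ht0 hu0]
  have hA : (a ^ 2 * s ^ 2 - 1) / (2 * a * s) < (a ^ 2 * t ^ 2 - 1) / (2 * a * t) := by
    rw [div_lt_div_iff₀ (by positivity) (by positivity)]
    nlinarith [mul_pos ha0 (mul_pos (sub_pos.2 hst) (show (0:ℝ) < a ^ 2 * (s * t) + 1 by positivity))]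
  have hB : ((a ^ 2 - 2) * s ^ 2 - 1) / (2 * s * u) ≤ ((a ^ 2 - 2) * t ^ 2 - 1) / (2 * t * v) := by
    rw [div_le_div_iff₀ (by positivity) (by positivity)]
    nlinarith [mul_nonneg (mul_nonneg (show (0:ℝ) ≤ a ^ 2 - 2 by linarith)
        (mul_pos hs ht0).le) (sub_nonneg.mpr h1),
      mul_lt_mul'' hst huv hs.le hu0.le]
  exact add_lt_add_of_lt_of_le (mul_lt_mul_of_pos_right hA hh) hB

/-- For `n ≥ 0` and `a ≥ √2`, the pantographic solution satisfies
`t(n,a,h) = 1/√(a²−2)` iff `h = n·a·√(a²−2)`; consequently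
`δ₁(a, n a√(a²−2)) = 0`. -/
theorem t_eq_delta1_zero (a : ℝ) (n : ℕ) (ha : Real.sqrt 2 ≤ a) (t : ℝ → ℝ)
    (ht : ∀ h : ℝ, 0 < h → 1 / a < t h ∧
      (n : ℝ) = (a ^ 2 * (t h) ^ 2 - 1) / (2 * a * t h) * h +
        ((a ^ 2 - 2) * (t h) ^ 2 - 1) / (2 * t h * Real.sqrt (1 + (t h) ^ 2))) :
    ∀ h : ℝ, 0 < h →
      ((t h = 1 / Real.sqrt (a ^ 2 - 2) ↔ h = n * a * Real.sqrt (a ^ 2 - 2)) ∧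
      (h = n * a * Real.sqrt (a ^ 2 - 2) →
        2 * (1 + (t h) ^ 2) / (1 + a ^ 2 * (t h) ^ 2) - 1 = 0)) := by
  have ha0 : 0 < a := lt_of_lt_of_le (Real.sqrt_pos.mpr two_pos) ha
  have ha2 : 2 ≤ a ^ 2 := by
    nlinarith [Real.sq_sqrt (show (0:ℝ) ≤ 2 by norm_num), Real.sqrt_nonneg 2]
  intro h hh
  obtain ⟨htpos, heq⟩ := ht h hh
  have htp : 0 < t h := lt_trans (by positivity) htpos
  rcases eq_or_lt_of_le ha2 with h2 | h2
  · -- a² = 2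
    have hr : Real.sqrt (a ^ 2 - 2) = 0 := by rw [← h2]; simp
    rw [hr]
    constructor
    · constructor
      · intro hth; simp at hth; linarith
      · intro hhe; simp at hhe; linarith
    · intro hhe; simp at hhe; linarith
  · -- a² > 2
    set r := Real.sqrt (a ^ 2 - 2) with hrdef
    have hr2 : r ^ 2 = a ^ 2 - 2 := Real.sq_sqrt (by linarith)
    have hr0 : 0 < r := Real.sqrt_pos.mpr (by linarith)
    have hr0' : (0:ℝ) < 1 / r := by positivity
    have key : ∀ h' : ℝ,
        (a ^ 2 * (1 / r) ^ 2 - 1) / (2 * a * (1 / r)) * h' +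
          ((a ^ 2 - 2) * (1 / r) ^ 2 - 1) / (2 * (1 / r) * Real.sqrt (1 + (1 / r) ^ 2)) =
        h' / (a * r) := by
      intro h'
      have hz : (a ^ 2 - 2) * (1 / r) ^ 2 - 1 = 0 := by
        field_simp
        linarith [hr2]
      rw [hz, zero_div, add_zero]
      rw [div_mul_eq_mul_div, div_eq_div_iff (by positivity) (by positivity)]
      field_simp
      linear_combination (-h') * hr2
    have hval : (a ^ 2 * (1 / r) ^ 2 - 1) / (2 * a * (1 / r)) * (n * a * r) +
        ((a ^ 2 - 2) * (1 / r) ^ 2 - 1) / (2 * (1 / r) * Real.sqrt (1 + (1 / r) ^ 2)) = n := by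
      rw [key]; field_simp
    have main : t h = 1 / r ↔ h = n * a * r := by
      constructor
      · intro hth
        rw [hth, key] at heq
        rw [eq_div_iff (by positivity)] at heq
        linarith [heq]
      · intro hhe
        rcases lt_trichotomy (t h) (1 / r) with hlt | heqq | hgt
        · exfalso
          have hm := mono_aux a h ha0 ha2 hh htp hlt
          rw [← heq, hhe, hval] at hm
          exact lt_irrefl _ hm
        · exact heqq
        · exfalso
          have hm := mono_aux a h ha0 ha2 hh hr0' hgt
          rw [← heq, hhe, hval] at hm
          exact lt_irrefl _ hm
    refine ⟨main, fun hhe => ?_⟩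
    rw [main.mpr hhe]
    have hd : 1 + a ^ 2 * (1 / r) ^ 2 ≠ 0 := by positivity
    rw [sub_eq_zero, div_eq_one_iff_eq hd]
    field_simp
    linarith [hr2]
end

section
/- With λ ∈ (0, π/2), β ∈ (0, π/4) defined by tan β = cos λ/(a sin λ), and l₂² /4 = (h + a cos λ)² + (n + sin λ)², one has ∂(l₂²)/∂λ = −8a sin λ (n + sin λ)(tan 2β − tan β) < 0 along the pantographic constraint (h + a cos λ)/(n + sin λ) = tan 2β; hence l₂ is strictly decreasing in λ. -/
open Real

/-- With `λ ∈ (0, π/2)`, `β ∈ (0, π/4)` defined by `tan β = cos λ/(a sin λ)`, and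
`l₂² = 4((h + a cos λ)² + (n + sin λ)²)`, along the pantographic constraint
`h + a cos λ = (n + sin λ) tan 2β` one has
`∂(l₂²)/∂λ = −8 a sin λ (n + sin λ)(tan 2β − tan β) < 0`;
hence `l₂` is strictly decreasing in `λ`. -/
theorem l2_sq_deriv (a h : ℝ) (n : ℕ) (lam beta : ℝ) (ha : 1 < a) (hh : 0 < h)
    (hlam : lam ∈ Set.Ioo 0 (π / 2)) (hbeta : beta ∈ Set.Ioo 0 (π / 4))
    (htanb : Real.tan beta = Real.cos lam / (a * Real.sin lam))
    (hconstraint : h + a * Real.cos lam = ((n : ℝ) + Real.sin lam) * Real.tan (2 * beta)) :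
    HasDerivAt (fun x : ℝ => 4 * ((h + a * Real.cos x) ^ 2 + ((n : ℝ) + Real.sin x) ^ 2))
      (-8 * a * Real.sin lam * ((n : ℝ) + Real.sin lam) *
        (Real.tan (2 * beta) - Real.tan beta)) lam ∧
    -8 * a * Real.sin lam * ((n : ℝ) + Real.sin lam) *
      (Real.tan (2 * beta) - Real.tan beta) < 0 := by
  obtain ⟨hl0, hl2⟩ := hlam
  obtain ⟨hb0, hb4⟩ := hbeta
  have hsin : 0 < Real.sin lam := Real.sin_pos_of_pos_of_lt_pi hl0 (lt_trans hl2 (by linarith [Real.pi_pos]))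
  have ha0 : (0:ℝ) < a := by linarith
  have hns : (0:ℝ) < (n : ℝ) + Real.sin lam := by positivity
  have htan_lt : Real.tan beta < Real.tan (2 * beta) := by
    apply Real.tan_lt_tan_of_lt_of_lt_pi_div_two (by linarith)
    · linarith
    · linarith [Real.pi_pos]
  have hkey : -8 * a * Real.sin lam * ((n : ℝ) + Real.sin lam) *
      (Real.tan (2 * beta) - Real.tan beta) =
      4 * (2 * (h + a * Real.cos lam) * (a * (-Real.sin lam)) +
        2 * ((n : ℝ) + Real.sin lam) * Real.cos lam) := by
    have hcos : Real.cos lam = a * Real.sin lam * Real.tan beta := by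
      rw [htanb]; field_simp
    rw [hconstraint, hcos]; ring
  constructor
  · have hd : HasDerivAt (fun x : ℝ => 4 * ((h + a * Real.cos x) ^ 2 + ((n : ℝ) + Real.sin x) ^ 2))
        (4 * (2 * (h + a * Real.cos lam) * (a * (-Real.sin lam)) +
          2 * ((n : ℝ) + Real.sin lam) * Real.cos lam)) lam := by
      have h1 : HasDerivAt (fun x : ℝ => h + a * Real.cos x) (a * (-Real.sin lam)) lam :=
        (((Real.hasDerivAt_cos lam).const_mul a).const_add h)
      have h2 : HasDerivAt (fun x : ℝ => (n : ℝ) + Real.sin x) (Real.cos lam) lam :=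
        ((Real.hasDerivAt_sin lam).const_add ((n : ℝ)))
      have := ((h1.pow 2).add (h2.pow 2)).const_mul 4
      refine this.congr_deriv ?_
      norm_num
    rw [hkey]; exact hd
  · have : 0 < 8 * a * Real.sin lam * ((n : ℝ) + Real.sin lam) *
        (Real.tan (2 * beta) - Real.tan beta) := by
      apply mul_pos; apply mul_pos; apply mul_pos <;> positivity
      · exact hns
      · linarith
    linarith
end

section
/- For 1 < a < √2 and integer n ≥ 0, δ₂(a,h) = l₂K/cos β − 1 tends to 2(n+1)/a² − 1 as h → 0⁺, where along the limit t → ∞ one has l₂ → 2(n+1), K → 1/a², cos β → 1. Consequently Δₙ(a,h) = δ₁δ₂ → Lₙ(a) = (2/a² − 1)(2(n+1)/a² − 1) > 0 as h → 0⁺. -/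
open Real Filter Set
open scoped Topology
set_option maxHeartbeats 1000000

/-- For `1 < a < √2`, as `h → 0⁺`: `δ₂(a,h) = l₂K/cos β − 1 → 2(n+1)/a² − 1`,
and consequently `Δₙ(a,h) = δ₁δ₂ → Lₙ(a) = (2/a² − 1)(2(n+1)/a² − 1) > 0`. -/
theorem delta2_and_Delta_limit (a : ℝ) (n : ℕ) (ha1 : 1 < a) (ha2 : a < Real.sqrt 2)
    (lam : ℝ → ℝ)
    (hlam : ∀ h : ℝ, 0 < h → lam h ∈ Ioo 0 (π / 2) ∧ 1 / a < Real.tan (lam h) ∧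
      (n : ℝ) = (a ^ 2 * (Real.tan (lam h)) ^ 2 - 1) / (2 * a * Real.tan (lam h)) * h +
        ((a ^ 2 - 2) * (Real.tan (lam h)) ^ 2 - 1) /
          (2 * Real.tan (lam h) * Real.sqrt (1 + (Real.tan (lam h)) ^ 2))) :
    Tendsto (fun h =>
        (2 * Real.sqrt ((h + a * Real.cos (lam h)) ^ 2 + ((n : ℝ) + Real.sin (lam h)) ^ 2)) *
          (a / (a ^ 2 * Real.sin (lam h) ^ 2 + Real.cos (lam h) ^ 2) ^ ((3 : ℝ) / 2)) /
          Real.cos (Real.arctan (Real.cos (lam h) / (a * Real.sin (lam h)))) - 1)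
      (nhdsWithin 0 (Ioi 0)) (nhds (2 * ((n : ℝ) + 1) / a ^ 2 - 1)) ∧
    Tendsto (fun h =>
        (2 * (1 + (Real.tan (lam h)) ^ 2) / (1 + a ^ 2 * (Real.tan (lam h)) ^ 2) - 1) *
        ((2 * Real.sqrt ((h + a * Real.cos (lam h)) ^ 2 + ((n : ℝ) + Real.sin (lam h)) ^ 2)) *
          (a / (a ^ 2 * Real.sin (lam h) ^ 2 + Real.cos (lam h) ^ 2) ^ ((3 : ℝ) / 2)) /
          Real.cos (Real.arctan (Real.cos (lam h) / (a * Real.sin (lam h)))) - 1))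
      (nhdsWithin 0 (Ioi 0))
      (nhds ((2 / a ^ 2 - 1) * (2 * ((n : ℝ) + 1) / a ^ 2 - 1))) ∧
    0 < (2 / a ^ 2 - 1) * (2 * ((n : ℝ) + 1) / a ^ 2 - 1) := by
  have ha0 : 0 < a := lt_trans one_pos ha1
  have ha2' : a ^ 2 < 2 := by
    nlinarith [Real.sq_sqrt (show (0:ℝ) ≤ 2 by norm_num), Real.sqrt_nonneg 2]
  set c : ℝ := (2 - a ^ 2) / (2 * Real.sqrt (a ^ 2 + 1)) with hc
  have hr : 0 < Real.sqrt (a ^ 2 + 1) := Real.sqrt_pos.mpr (by positivity)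
  have hcpos : 0 < c := div_pos (by linarith) (by positivity)
  -- pointwise lower bound on tan (lam h)
  have hbound : ∀ h : ℝ, 0 < h → 2 * c / (a * h) ≤ Real.tan (lam h) := by
    intro h hh
    obtain ⟨hmem, ht, heq⟩ := hlam h hh
    set t := Real.tan (lam h) with htdef
    have ht0 : 0 < t := lt_trans (by positivity) ht
    have hat : 1 < a * t := by
      rw [div_lt_iff₀ ha0] at ht; nlinarith
    have hs : 0 < Real.sqrt (1 + t ^ 2) := Real.sqrt_pos.mpr (by positivity)
    have hs2 : (Real.sqrt (1 + t ^ 2)) ^ 2 = 1 + t ^ 2 := Real.sq_sqrt (by positivity)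
    have hr2 : (Real.sqrt (a ^ 2 + 1)) ^ 2 = a ^ 2 + 1 := Real.sq_sqrt (by positivity)
    set s := Real.sqrt (1 + t ^ 2) with hsdef
    set r := Real.sqrt (a ^ 2 + 1) with hrdef
    have ha2t2 : 1 ≤ a ^ 2 * t ^ 2 := by nlinarith
    have htrs : s ≤ t * r := by
      have hsq : s ^ 2 ≤ (t * r) ^ 2 := by rw [hs2]; nlinarith
      nlinarith [mul_pos ht0 hr]
    have key : c ≤ ((2 - a ^ 2) * t ^ 2 + 1) / (2 * t * s) := by
      rw [hc, div_le_div_iff₀ (by positivity) (by positivity)]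
      nlinarith [mul_nonneg (mul_nonneg (show (0:ℝ) ≤ 2 - a ^ 2 by linarith) ht0.le)
        (sub_nonneg.mpr htrs), hr]
    have hnn : (0:ℝ) ≤ (n : ℝ) := Nat.cast_nonneg n
    have hflow : c ≤ (a ^ 2 * t ^ 2 - 1) / (2 * a * t) * h := by
      have heq' : (a ^ 2 * t ^ 2 - 1) / (2 * a * t) * h
          = (n : ℝ) - ((a ^ 2 - 2) * t ^ 2 - 1) / (2 * t * s) := by linarith
      rw [heq', show (a ^ 2 - 2) * t ^ 2 - 1 = -((2 - a ^ 2) * t ^ 2 + 1) by ring, neg_div]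
      linarith
    have hfle : (a ^ 2 * t ^ 2 - 1) / (2 * a * t) * h ≤ a * t / 2 * h := by
      apply mul_le_mul_of_nonneg_right _ hh.le
      rw [div_le_div_iff₀ (by positivity) (by norm_num : (0:ℝ) < 2)]
      nlinarith
    rw [div_le_iff₀ (by positivity : (0:ℝ) < a * h)]
    have h5 : c ≤ a * t / 2 * h := le_trans hflow hfle
    have h6 : t * (a * h) = 2 * (a * t / 2 * h) := by ring
    rw [h6]; linarith
  -- tan (lam h) → ∞
  have htan : Tendsto (fun h => Real.tan (lam h)) (𝓝[>] (0:ℝ)) atTop := by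
    refine tendsto_atTop_mono' _ (eventually_nhdsWithin_of_forall fun h hh => hbound h hh) ?_
    have h1 : Tendsto (fun h : ℝ => h⁻¹) (𝓝[>] (0:ℝ)) atTop := tendsto_inv_nhdsGT_zero
    have h2 := h1.const_mul_atTop (show (0:ℝ) < 2 * c / a by positivity)
    refine h2.congr fun h => ?_
    rw [← div_eq_mul_inv, div_div]
  -- lam h → π/2
  have hlamlim : Tendsto lam (𝓝[>] (0:ℝ)) (𝓝 (π / 2)) := by
    have h1 : Tendsto (fun h => Real.arctan (Real.tan (lam h))) (𝓝[>] (0:ℝ)) (𝓝 (π / 2)) :=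
      (Real.tendsto_arctan_atTop.mono_right nhdsWithin_le_nhds).comp htan
    refine Tendsto.congr' (eventually_nhdsWithin_of_forall fun h hh => ?_) h1
    obtain ⟨hmem, -, -⟩ := hlam h hh
    exact Real.arctan_tan (by linarith [hmem.1, Real.pi_pos]) hmem.2
  have hh0 : Tendsto (fun h : ℝ => h) (𝓝[>] (0:ℝ)) (𝓝 0) := tendsto_id.mono_left nhdsWithin_le_nhds
  have hcosl : Tendsto (fun h => Real.cos (lam h)) (𝓝[>] (0:ℝ)) (𝓝 0) := by
    have := (Real.continuous_cos.tendsto (π / 2)).comp hlamlim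
    rwa [Real.cos_pi_div_two] at this
  have hsinl : Tendsto (fun h => Real.sin (lam h)) (𝓝[>] (0:ℝ)) (𝓝 1) := by
    have := (Real.continuous_sin.tendsto (π / 2)).comp hlamlim
    rwa [Real.sin_pi_div_two] at this
  have hpow : ((a ^ 2 : ℝ)) ^ ((3:ℝ)/2) = a ^ 3 := by
    rw [show ((3:ℝ)/2) = (1/2) * 3 by ring, Real.rpow_mul (by positivity),
      show ((3:ℝ)) = ((3:ℕ):ℝ) by norm_num, Real.rpow_natCast,
      ← Real.sqrt_eq_rpow, Real.sqrt_sq ha0.le]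
  -- limit of sqrt term
  have hA : Tendsto (fun h => (h + a * Real.cos (lam h)) ^ 2 + ((n : ℝ) + Real.sin (lam h)) ^ 2)
      (𝓝[>] (0:ℝ)) (𝓝 (((n : ℝ) + 1) ^ 2)) := by
    have := ((hh0.add (hcosl.const_mul a)).pow 2).add
      ((tendsto_const_nhds (x := (n:ℝ)) (f := 𝓝[>] (0:ℝ))).add hsinl |>.pow 2)
    simpa using this
  have hsqrt : Tendsto (fun h =>
      Real.sqrt ((h + a * Real.cos (lam h)) ^ 2 + ((n : ℝ) + Real.sin (lam h)) ^ 2))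
      (𝓝[>] (0:ℝ)) (𝓝 ((n : ℝ) + 1)) := by
    have := (Real.continuous_sqrt.tendsto _).comp hA
    rwa [Real.sqrt_sq (by positivity)] at this
  have hB : Tendsto (fun h => a ^ 2 * Real.sin (lam h) ^ 2 + Real.cos (lam h) ^ 2)
      (𝓝[>] (0:ℝ)) (𝓝 (a ^ 2)) := by
    have := ((hsinl.pow 2).const_mul (a ^ 2)).add (hcosl.pow 2)
    simpa using this
  have hBr := hB.rpow_const (p := (3:ℝ)/2) (Or.inl (by positivity))
  have hK : Tendsto (fun h =>
      a / (a ^ 2 * Real.sin (lam h) ^ 2 + Real.cos (lam h) ^ 2) ^ ((3:ℝ)/2))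
      (𝓝[>] (0:ℝ)) (𝓝 (a / (a ^ 2) ^ ((3:ℝ)/2))) :=
    tendsto_const_nhds.div hBr (by rw [hpow]; positivity)
  have hcb : Tendsto (fun h =>
      Real.cos (Real.arctan (Real.cos (lam h) / (a * Real.sin (lam h)))))
      (𝓝[>] (0:ℝ)) (𝓝 1) := by
    have hq : Tendsto (fun h => Real.cos (lam h) / (a * Real.sin (lam h)))
        (𝓝[>] (0:ℝ)) (𝓝 0) := by
      have := hcosl.div (hsinl.const_mul a) (by simpa using ha0.ne')
      rwa [zero_div] at this
    have := (Real.continuous_cos.tendsto _).comp ((Real.continuous_arctan.tendsto _).comp hq)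
    rw [Real.arctan_zero, Real.cos_zero] at this; exact this
  -- δ₂ limit
  have d2 : Tendsto (fun h =>
      (2 * Real.sqrt ((h + a * Real.cos (lam h)) ^ 2 + ((n : ℝ) + Real.sin (lam h)) ^ 2)) *
        (a / (a ^ 2 * Real.sin (lam h) ^ 2 + Real.cos (lam h) ^ 2) ^ ((3 : ℝ) / 2)) /
        Real.cos (Real.arctan (Real.cos (lam h) / (a * Real.sin (lam h)))) - 1)
      (𝓝[>] (0:ℝ)) (𝓝 (2 * ((n : ℝ) + 1) / a ^ 2 - 1)) := by
    have h1 := (((hsqrt.const_mul 2).mul hK).div hcb one_ne_zero).sub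
      (tendsto_const_nhds (x := (1:ℝ)))
    have hval : 2 * ((n : ℝ) + 1) * (a / (a ^ 2) ^ ((3:ℝ)/2)) / 1 - 1
        = 2 * ((n : ℝ) + 1) / a ^ 2 - 1 := by
      rw [hpow]
      have hx : a / a ^ 3 = 1 / a ^ 2 := by
        rw [div_eq_div_iff (by positivity) (by positivity)]; ring
      rw [hx]; ring
    rw [← hval]
    exact h1
  -- δ₁ limit
  have G : Tendsto (fun t : ℝ => 2 * (1 + t ^ 2) / (1 + a ^ 2 * t ^ 2) - 1) atTop
      (𝓝 (2 / a ^ 2 - 1)) := by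
    have hinv : Tendsto (fun t : ℝ => (t⁻¹) ^ 2) atTop (𝓝 0) := by
      simpa using (tendsto_inv_atTop_zero (𝕜 := ℝ)).pow 2
    have h1 : Tendsto (fun t : ℝ => (2 * (t⁻¹) ^ 2 + 2) / ((t⁻¹) ^ 2 + a ^ 2) - 1) atTop
        (𝓝 ((2 * 0 + 2) / (0 + a ^ 2) - 1)) :=
      (((hinv.const_mul 2).add tendsto_const_nhds).div
        (hinv.add tendsto_const_nhds) (by positivity)).sub tendsto_const_nhds
    have h3 : (fun t : ℝ => (2 * (t⁻¹) ^ 2 + 2) / ((t⁻¹) ^ 2 + a ^ 2) - 1)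
        =ᶠ[atTop] fun t : ℝ => 2 * (1 + t ^ 2) / (1 + a ^ 2 * t ^ 2) - 1 := by
      filter_upwards [eventually_gt_atTop (0:ℝ)] with t ht
      have ht' : t ≠ 0 := ht.ne'
      field_simp
    have h4 := h1.congr' h3
    norm_num at h4
    exact h4
  have d1 : Tendsto (fun h =>
      2 * (1 + (Real.tan (lam h)) ^ 2) / (1 + a ^ 2 * (Real.tan (lam h)) ^ 2) - 1)
      (𝓝[>] (0:ℝ)) (𝓝 (2 / a ^ 2 - 1)) := G.comp htan
  have p1 : 0 < 2 / a ^ 2 - 1 := by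
    rw [sub_pos, lt_div_iff₀ (by positivity)]; linarith
  have p2 : 0 < 2 * ((n : ℝ) + 1) / a ^ 2 - 1 := by
    rw [sub_pos, lt_div_iff₀ (by positivity)]
    nlinarith [Nat.cast_nonneg (α := ℝ) n]
  exact ⟨d2, d1.mul d2, mul_pos p1 p2⟩
end

section
/- For fixed a > 1 and n ≥ 0, Δₙ(a,h) → +∞ as h → +∞, since δ₂ = l₂K/cos β − 1 → +∞ (because l₂ ≥ 2h → ∞ while K/cos β stays bounded away from 0 as t → 1/a) and, as t → 1/a, δ₁ → 2(1 + 1/a²)/2 − 1 = 1/a² > 0; hence Δₙ = δ₁δ₂ → +∞. -/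
open Real Filter Set

/-- For fixed `a > 1` and `n ≥ 0`, as `h → +∞`: `δ₁ → 1/a²  > 0` and
`Δₙ(a,h) = δ₁·δ₂ → +∞` (since `δ₂ = l₂K/cos β − 1 → +∞`). -/
theorem Delta_tendsto_atTop (a : ℝ) (n : ℕ) (ha : 1 < a) (lam : ℝ → ℝ)
    (hlam : ∀ h : ℝ, 0 < h → lam h ∈ Ioo 0 (π / 2) ∧ 1 / a < Real.tan (lam h) ∧
      (n : ℝ) = (a ^ 2 * (Real.tan (lam h)) ^ 2 - 1) / (2 * a * Real.tan (lam h)) * h +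
        ((a ^ 2 - 2) * (Real.tan (lam h)) ^ 2 - 1) /
          (2 * Real.tan (lam h) * Real.sqrt (1 + (Real.tan (lam h)) ^ 2))) :
    Tendsto (fun h => 2 * (1 + (Real.tan (lam h)) ^ 2) / (1 + a ^ 2 * (Real.tan (lam h)) ^ 2) - 1)
      atTop (nhds (1 / a ^ 2)) ∧
    Tendsto (fun h =>
        (2 * (1 + (Real.tan (lam h)) ^ 2) / (1 + a ^ 2 * (Real.tan (lam h)) ^ 2) - 1) *
        ((2 * Real.sqrt ((h + a * Real.cos (lam h)) ^ 2 + ((n : ℝ) + Real.sin (lam h)) ^ 2)) *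
          (a / (a ^ 2 * Real.sin (lam h) ^ 2 + Real.cos (lam h) ^ 2) ^ ((3 : ℝ) / 2)) /
          Real.cos (Real.arctan (Real.cos (lam h) / (a * Real.sin (lam h)))) - 1))
      atTop atTop := by
  have ha0 : (0 : ℝ) < a := lt_trans one_pos ha
  -- upper bound on tan (lam h)
  have hub : ∀ h : ℝ, 0 < h → Real.tan (lam h) ≤
      (((n : ℝ) + a + 1) / h + Real.sqrt ((((n : ℝ) + a + 1) / h) ^ 2 + 1)) / a := by
    intro h hh
    obtain ⟨hmem, hgt, heq⟩ := hlam h hh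
    set u := Real.tan (lam h) with hu
    have hu0 : 0 < u := lt_trans (by positivity) hgt
    have hau : 1 < a * u := by
      have := (div_lt_iff₀ ha0).mp hgt
      nlinarith
    have hs0 : 0 < Real.sqrt (1 + u ^ 2) := Real.sqrt_pos.mpr (by positivity)
    have hs2 : Real.sqrt (1 + u ^ 2) ^ 2 = 1 + u ^ 2 := Real.sq_sqrt (by positivity)
    have hsle : Real.sqrt (1 + u ^ 2) ≤ 1 + u := by
      have h1 : Real.sqrt (1 + u ^ 2) ≤ Real.sqrt ((1 + u) ^ 2) :=
        Real.sqrt_le_sqrt (by nlinarith)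
      rwa [Real.sqrt_sq (by linarith)] at h1
    have hsu : Real.sqrt (1 + u ^ 2) ≤ (a + 1) * u := by nlinarith
    -- lower bound on the second summand
    have hg : -(a + 1) ≤ ((a ^ 2 - 2) * u ^ 2 - 1) / (2 * u * Real.sqrt (1 + u ^ 2)) := by
      rw [le_div_iff₀ (by positivity)]
      nlinarith [mul_nonneg hs0.le (sub_nonneg.mpr hsu), sq_nonneg (a * u)]
    have hfh : (a ^ 2 * u ^ 2 - 1) / (2 * a * u) * h ≤ (n : ℝ) + a + 1 := by linarith
    have hf : (a ^ 2 * u ^ 2 - 1) / (2 * a * u) ≤ ((n : ℝ) + a + 1) / h :=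
      (le_div_iff₀ hh).mpr hfh
    set ε := ((n : ℝ) + a + 1) / h with hε
    have hε0 : 0 ≤ ε := by positivity
    have hquad : a ^ 2 * u ^ 2 - 1 ≤ ε * (2 * a * u) := (div_le_iff₀ (by positivity)).mp hf
    have hkey : a * u - ε ≤ Real.sqrt (ε ^ 2 + 1) := by
      have h1 : a * u - ε ≤ Real.sqrt ((a * u - ε) ^ 2) := by
        rw [Real.sqrt_sq_eq_abs]; exact le_abs_self _
      refine h1.trans (Real.sqrt_le_sqrt ?_)
      nlinarith
    rw [le_div_iff₀ ha0]
    nlinarith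
  -- tan (lam h) → 1/a
  have htt : Tendsto (fun h => Real.tan (lam h)) atTop (nhds (1 / a)) := by
    have h0 : Tendsto (fun h : ℝ => ((n : ℝ) + a + 1) / h) atTop (nhds 0) :=
      tendsto_const_nhds.div_atTop tendsto_id
    have hc : Continuous (fun x : ℝ => (x + Real.sqrt (x ^ 2 + 1)) / a) := by
      fun_prop
    have hubt : Tendsto (fun h : ℝ =>
        (((n : ℝ) + a + 1) / h + Real.sqrt ((((n : ℝ) + a + 1) / h) ^ 2 + 1)) / a)
        atTop (nhds (1 / a)) := by
      have := (hc.tendsto 0).comp h0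
      simpa [Function.comp_def] using this
    refine tendsto_of_tendsto_of_tendsto_of_le_of_le' tendsto_const_nhds hubt ?_ ?_
    · filter_upwards [eventually_gt_atTop 0] with h hh
      exact (hlam h hh).2.1.le
    · filter_upwards [eventually_gt_atTop 0] with h hh
      exact hub h hh
  -- lam h → arctan (1/a)
  have hlamlim : Tendsto lam atTop (nhds (Real.arctan (1 / a))) := by
    have h1 : Tendsto (fun h => Real.arctan (Real.tan (lam h))) atTop
        (nhds (Real.arctan (1 / a))) := (Real.continuous_arctan.tendsto _).comp htt
    refine Tendsto.congr' ?_ h1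
    filter_upwards [eventually_gt_atTop 0] with h hh
    obtain ⟨⟨hm1, hm2⟩, _, _⟩ := hlam h hh
    exact Real.arctan_tan (by linarith [Real.pi_pos]) hm2
  -- first part : δ₁ → 1/a²
  have hden1 : (1 : ℝ) + a ^ 2 * (1 / a) ^ 2 = 2 := by field_simp; norm_num
  have hδ1 : Tendsto
      (fun h => 2 * (1 + (Real.tan (lam h)) ^ 2) / (1 + a ^ 2 * (Real.tan (lam h)) ^ 2) - 1)
      atTop (nhds (1 / a ^ 2)) := by
    have hc : ContinuousAt (fun t : ℝ => 2 * (1 + t ^ 2) / (1 + a ^ 2 * t ^ 2) - 1) (1 / a) := by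
      apply ContinuousAt.sub _ continuousAt_const
      apply ContinuousAt.div (by fun_prop) (by fun_prop)
      rw [hden1]; norm_num
    have hval : 2 * (1 + (1 / a) ^ 2) / (1 + a ^ 2 * (1 / a) ^ 2) - 1 = 1 / a ^ 2 := by
      rw [hden1]; field_simp; ring
    have h2 := hc.tendsto.comp htt
    rw [Function.comp_def] at h2
    rwa [hval] at h2
  refine ⟨hδ1, ?_⟩
  -- second part
  set l0 := Real.arctan (1 / a) with hl0
  have hl0pos : 0 < l0 := by
    rw [hl0, ← Real.arctan_zero]
    exact Real.arctan_strictMono (by positivity)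
  have hl0lt : l0 < π / 2 := Real.arctan_lt_pi_div_two _
  have hsin0 : 0 < Real.sin l0 :=
    Real.sin_pos_of_pos_of_lt_pi hl0pos (lt_trans hl0lt (half_lt_self Real.pi_pos))
  have hden : 0 < a ^ 2 * Real.sin l0 ^ 2 + Real.cos l0 ^ 2 := by
    have h1 := mul_pos (pow_pos ha0 2) (pow_pos hsin0 2)
    nlinarith [sq_nonneg (Real.cos l0)]
  -- M = K/cosβ converges to a positive limit
  set G : ℝ → ℝ := fun l => (a / (a ^ 2 * Real.sin l ^ 2 + Real.cos l ^ 2) ^ ((3 : ℝ) / 2)) /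
      Real.cos (Real.arctan (Real.cos l / (a * Real.sin l))) with hG
  have hc1 : ContinuousAt
      (fun l : ℝ => (a ^ 2 * Real.sin l ^ 2 + Real.cos l ^ 2) ^ ((3 : ℝ) / 2)) l0 :=
    ContinuousAt.rpow_const (by fun_prop) (Or.inr (by norm_num))
  have hc2 : ContinuousAt
      (fun l : ℝ => Real.cos (Real.arctan (Real.cos l / (a * Real.sin l)))) l0 := by
    have hin : ContinuousAt (fun l : ℝ => Real.cos l / (a * Real.sin l)) l0 :=
      ContinuousAt.div (by fun_prop) (by fun_prop) (by positivity)
    exact Real.continuous_cos.continuousAt.comp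
      (Real.continuous_arctan.continuousAt.comp hin)
  have hGc : ContinuousAt G l0 := by
    rw [hG]
    exact (continuousAt_const.div hc1 (Real.rpow_pos_of_pos hden _).ne').div hc2
      (Real.cos_arctan_pos _).ne'
  have hGpos : 0 < G l0 := by
    rw [hG]
    exact div_pos (div_pos ha0 (Real.rpow_pos_of_pos hden _)) (Real.cos_arctan_pos _)
  have hM : Tendsto (fun h => G (lam h)) atTop (nhds (G l0)) := hGc.tendsto.comp hlamlim
  -- L tends to atTop
  have hL : Tendsto (fun h : ℝ =>
      2 * Real.sqrt ((h + a * Real.cos (lam h)) ^ 2 + ((n : ℝ) + Real.sin (lam h)) ^ 2))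
      atTop atTop := by
    have hg : Tendsto (fun h : ℝ => 2 * h + (-(2 * a))) atTop atTop :=
      tendsto_atTop_add_const_right _ _ (Tendsto.const_mul_atTop two_pos tendsto_id)
    refine tendsto_atTop_mono' atTop ?_ hg
    filter_upwards [eventually_ge_atTop 0] with h hh
    have h1 : (h + a * Real.cos (lam h)) ^ 2 ≤
        (h + a * Real.cos (lam h)) ^ 2 + ((n : ℝ) + Real.sin (lam h)) ^ 2 :=
      le_add_of_nonneg_right (sq_nonneg _)
    have h2 := Real.sqrt_le_sqrt h1
    rw [Real.sqrt_sq_eq_abs] at h2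
    have h3 : h + a * Real.cos (lam h) ≤ |h + a * Real.cos (lam h)| := le_abs_self _
    have h4 : -1 ≤ Real.cos (lam h) := Real.neg_one_le_cos _
    nlinarith
  -- combine
  have hLM : Tendsto (fun h : ℝ =>
      2 * Real.sqrt ((h + a * Real.cos (lam h)) ^ 2 + ((n : ℝ) + Real.sin (lam h)) ^ 2) *
      G (lam h)) atTop atTop := hL.atTop_mul_pos hGpos hM
  have hδ2 : Tendsto (fun h : ℝ =>
      2 * Real.sqrt ((h + a * Real.cos (lam h)) ^ 2 + ((n : ℝ) + Real.sin (lam h)) ^ 2) *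
      G (lam h) - 1) atTop atTop := by
    simpa [sub_eq_add_neg] using tendsto_atTop_add_const_right atTop (-1 : ℝ) hLM
  have hfinal := hδ1.pos_mul_atTop (by positivity) hδ2
  refine hfinal.congr (fun h => ?_)
  rw [hG]
  ring
end

section
/- For every a > √2 and every integer n ≥ 0, the open intervals (n a√(a²−2), (n+1) a√(a²−2)) and (hₙ⁰(a), hₙ¹(a)) have nonempty intersection, where hₙ⁰(a) = n a√(a²−2) and hₙ¹(a) > hₙ⁰(a) is the unique h with Δₙ(a,h) = 1. In particular, since the intervals (n a√(a²−2), (n+1) a√(a²−2)) for n = 0, 1, 2, ... cover (0, ∞), for every H > 0 there exist n and h > H with 0 < Δₙ(a,h) < 1. -/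
open Real Filter Set Topology

/-! On each branch `h > n c`, `c = a√(a²−2) > 0`, the map `Δₙ` increases strictly from the
limit `0` and reaches `1` at `hₙ¹`, so `0 < Δₙ < 1` on all of `(n c, hₙ¹)`. Since `c > 0`, this
interval meets `(n c, (n+1) c)`, and its left end `n c` exceeds any given `H` for large `n`. -/

theorem StrictMonoOn.lt_of_tendsto_nhdsGT {α β : Type*} [LinearOrder α] [TopologicalSpace α]
    [OrderTopology α] [DenselyOrdered α] [LinearOrder β] [TopologicalSpace β]
    [OrderClosedTopology β] {f : α → β} {b x : α} {L : β} (hf : StrictMonoOn f (Ioi b))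
    (hlim : Tendsto f (𝓝[>] b) (𝓝 L)) (hx : b < x) : L < f x := by
  obtain ⟨m, hbm, hmx⟩ := exists_between hx
  have : (𝓝[>] b).NeBot := nhdsGT_neBot_of_exists_gt ⟨x, hx⟩
  have hLm : L ≤ f m := by
    refine le_of_tendsto hlim ?_
    filter_upwards [Ioo_mem_nhdsGT hbm] with y hy
    exact (hf hy.1 hbm hy.2).le
  exact hLm.trans_lt (hf hbm (hbm.trans hmx) hmx)

theorem StrictMonoOn.mem_Ioo_of_tendsto_nhdsGT {α β : Type*} [LinearOrder α]
    [TopologicalSpace α] [OrderTopology α] [DenselyOrdered α] [LinearOrder β]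
    [TopologicalSpace β] [OrderClosedTopology β] {f : α → β} {b h h₁ : α} {L U : β}
    (hf : StrictMonoOn f (Ioi b)) (hlim : Tendsto f (𝓝[>] b) (𝓝 L)) (hb₁ : b < h₁)
    (hf₁ : f h₁ = U) (hh : h ∈ Ioo b h₁) : f h ∈ Ioo L U :=
  ⟨hf.lt_of_tendsto_nhdsGT hlim hh.1, hf₁ ▸ hf hh.1 hb₁ hh.2⟩

theorem mul_sqrt_sq_sub_two_pos {a : ℝ} (ha : √2 < a) : 0 < a * √(a ^ 2 - 2) := by
  have ha0 : 0 < a := (sqrt_nonneg 2).trans_lt ha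
  have ha2 : 2 < a ^ 2 := by simpa using (sqrt_lt' ha0).1 ha
  exact mul_pos ha0 (sqrt_pos.2 (by linarith))

theorem no_upper_bound_for_ellipticity_general (a : ℝ) (ha : Real.sqrt 2 < a)
    (Δ : ℕ → ℝ → ℝ) (h1 : ℕ → ℝ)
    (hmono : ∀ n : ℕ, StrictMonoOn (Δ n) (Ioi ((n : ℝ) * a * Real.sqrt (a ^ 2 - 2))))
    (hlim0 : ∀ n : ℕ, Tendsto (Δ n)
      (nhdsWithin ((n : ℝ) * a * Real.sqrt (a ^ 2 - 2))
        (Ioi ((n : ℝ) * a * Real.sqrt (a ^ 2 - 2)))) (nhds 0))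
    (hh1 : ∀ n : ℕ, (n : ℝ) * a * Real.sqrt (a ^ 2 - 2) < h1 n ∧ Δ n (h1 n) = 1) :
    (∀ n : ℕ,
      (Ioo ((n : ℝ) * a * Real.sqrt (a ^ 2 - 2)) (((n : ℝ) + 1) * a * Real.sqrt (a ^ 2 - 2)) ∩
        Ioo ((n : ℝ) * a * Real.sqrt (a ^ 2 - 2)) (h1 n)).Nonempty) ∧
    ∀ H : ℝ, 0 < H → ∃ (n : ℕ) (h : ℝ), H < h ∧ 0 < Δ n h ∧ Δ n h < 1 := by
  have hc := mul_sqrt_sq_sub_two_pos ha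
  refine ⟨fun n => ?_, fun H _ => ?_⟩
  · rw [Ioo_inter_Ioo, max_self, nonempty_Ioo, lt_min_iff]
    exact ⟨by nlinarith, (hh1 n).1⟩
  · obtain ⟨n, hn⟩ := exists_nat_ge (H / (a * √(a ^ 2 - 2)))
    have hH : H ≤ (n : ℝ) * a * √(a ^ 2 - 2) := by
      rw [div_le_iff₀ hc] at hn; linarith
    obtain ⟨h, hh⟩ := nonempty_Ioo.2 (hh1 n).1
    exact ⟨n, h, hH.trans_lt hh.1,
      (hmono n).mem_Ioo_of_tendsto_nhdsGT (hlim0 n) (hh1 n).1 (hh1 n).2 hh⟩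

/-- For `a > √2` and each `n`, the intervals `(n a√(a²−2), (n+1) a√(a²−2))` and
`(hₙ⁰(a), hₙ¹(a))` intersect, where `hₙ⁰(a) = n a√(a²−2)` and `hₙ¹(a)` is the
unique `h > hₙ⁰(a)` with `Δₙ(a,h) = 1`. Since the intervals
`(n a√(a²−2), (n+1) a√(a²−2))` cover `(0,∞)`, for every `H > 0` there exist `n`
and `h > H` with `0 < Δₙ(a,h) < 1`: no upper bound on `h` for elliptic islands. -/
theorem no_upper_bound_for_ellipticity (a : ℝ) (ha : Real.sqrt 2 < a)
    (Δ : ℕ → ℝ → ℝ) (h1 : ℕ → ℝ)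
    (hmono : ∀ n : ℕ, StrictMonoOn (Δ n) (Ioi ((n : ℝ) * a * Real.sqrt (a ^ 2 - 2))))
    (hcont : ∀ n : ℕ, ContinuousOn (Δ n) (Ioi ((n : ℝ) * a * Real.sqrt (a ^ 2 - 2))))
    (hlim0 : ∀ n : ℕ, Tendsto (Δ n)
      (nhdsWithin ((n : ℝ) * a * Real.sqrt (a ^ 2 - 2))
        (Ioi ((n : ℝ) * a * Real.sqrt (a ^ 2 - 2)))) (nhds 0))
    (hlimtop : ∀ n : ℕ, Tendsto (Δ n) atTop atTop)
    (hh1 : ∀ n : ℕ, (n : ℝ) * a * Real.sqrt (a ^ 2 - 2) < h1 n ∧ Δ n (h1 n) = 1) :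
    (∀ n : ℕ,
      (Ioo ((n : ℝ) * a * Real.sqrt (a ^ 2 - 2)) (((n : ℝ) + 1) * a * Real.sqrt (a ^ 2 - 2)) ∩
        Ioo ((n : ℝ) * a * Real.sqrt (a ^ 2 - 2)) (h1 n)).Nonempty) ∧
    ∀ H : ℝ, 0 < H → ∃ (n : ℕ) (h : ℝ), H < h ∧ 0 < Δ n h ∧ Δ n h < 1 :=
  no_upper_bound_for_ellipticity_general a ha Δ h1 hmono hlim0 hh1
end
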